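/- arXiv:1707.05201 — 6 statements merged into one kernel-verified Lean document; each statement's English description precedes it below -/
import Mathlib

section
/- Let Y be a unit vector in a 3-dimensional oriented real inner product space (W, h, ε) and define the endomorphism T on the space of (0,2)-tensors by T^{kl}{}_{ij} = (3/2) Y_{(i} δ_{j)}{}^{(k} Y^{l)} − 3 Y_i Y_j Y^k Y^l + (1/2) h_{ij} Y^k Y^l + (1/2) h^{kl} Y_i Y_j − (1/6) h_{ij} h^{kl}. Then T is self-adjoint with respect to the Hermitian inner product ⟨E, Ẽ⟩ = \bar{E}^{ij} Ẽ_{ij} on complex (0,2)-tensors, and its eigenvalues are exactly −1, 0, and 3/4, with respective eigenspace dimensions 1, 6, and 2. -/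
set_option maxHeartbeats 2000000

noncomputable section

/-- The 9-dimensional complex vector space of (0,2)-tensors on a 3-dimensional real
inner product space, in components w.r.t. an orthonormal basis (so `h_{ij} = δ_{ij}`). -/
abbrev Tens2 := Fin 3 → Fin 3 → ℂ

/-- Kronecker delta. -/
def kd (a b : Fin 3) : ℂ := if a = b then 1 else 0

/-- The coefficients `T^{kl}{}_{ij} = (3/2) Y_{(i} δ_{j)}{}^{(k} Y^{l)} − 3 Y_i Y_j Y^k Y^l
+ (1/2) h_{ij} Y^k Y^l + (1/2) h^{kl} Y_i Y_j − (1/6) h_{ij} h^{kl}` in an orthonormal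
basis, `Y i = Y_i`. -/
def Tcoef (Y : Fin 3 → ℝ) (k l i j : Fin 3) : ℂ :=
  (3/8) * ((Y i : ℂ) * kd j k * (Y l : ℂ) + (Y i : ℂ) * kd j l * (Y k : ℂ)
          + (Y j : ℂ) * kd i k * (Y l : ℂ) + (Y j : ℂ) * kd i l * (Y k : ℂ))
  - 3 * (Y i : ℂ) * (Y j : ℂ) * (Y k : ℂ) * (Y l : ℂ)
  + (1/2) * kd i j * (Y k : ℂ) * (Y l : ℂ)
  + (1/2) * kd k l * (Y i : ℂ) * (Y j : ℂ)
  - (1/6) * kd i j * kd k l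

/-! ### Auxiliary definitions -/

def cv (Y : Fin 3 → ℝ) (E : Tens2) (j : Fin 3) : ℂ := ∑ l, E j l * (Y l : ℂ)
def cw (Y : Fin 3 → ℝ) (E : Tens2) (j : Fin 3) : ℂ := ∑ k, (Y k : ℂ) * E k j
def cq (Y : Fin 3 → ℝ) (E : Tens2) : ℂ := ∑ k, ∑ l, (Y k : ℂ) * (Y l : ℂ) * E k l
def ct (E : Tens2) : ℂ := ∑ k, E k k

def PnegT (Y : Fin 3 → ℝ) : Tens2 := fun i j => (Y i : ℂ) * (Y j : ℂ) - (1/3) * kd i j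

def NT (Y : Fin 3 → ℝ) (k : Fin 3) : Tens2 :=
  fun i j => (Y i : ℂ) * kd j k + (Y j : ℂ) * kd i k - (2/3) * (Y k : ℂ) * kd i j

def mT (Y : Fin 3 → ℝ) (E : Tens2) (k : Fin 3) : ℂ :=
  (3/8) * (cv Y E k + cw Y E k) + ((-3/2) * cq Y E + (1/4) * ct E) * (Y k : ℂ)

def Lfun (Y : Fin 3 → ℝ) (X : Fin 3 → ℂ) : Tens2 := fun i j =>
  (Y i : ℂ) * (X j - (∑ m, X m * (Y m : ℂ)) * (Y j : ℂ))
  + (Y j : ℂ) * (X i - (∑ m, X m * (Y m : ℂ)) * (Y i : ℂ))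

def Lmap (Y : Fin 3 → ℝ) : (Fin 3 → ℂ) →ₗ[ℂ] Tens2 where
  toFun := Lfun Y
  map_add' X Z := by
    funext i j
    simp only [Lfun, Fin.sum_univ_three, Pi.add_apply]
    ring
  map_smul' c X := by
    funext i j
    simp only [Lfun, Fin.sum_univ_three, Pi.smul_apply, smul_eq_mul, RingHom.id_apply]
    ring

section Aux

variable {Y : Fin 3 → ℝ} {T : Module.End ℂ Tens2}

lemma lemA (hT : ∀ (E : Tens2) (i j : Fin 3), T E i j = ∑ k, ∑ l, Tcoef Y k l i j * E k l)
    (F : Tens2) (i j : Fin 3) :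
    T F i j = (3/8) * ((Y i : ℂ) * cv Y F j + (Y i : ℂ) * cw Y F j
        + (Y j : ℂ) * cv Y F i + (Y j : ℂ) * cw Y F i)
      - 3 * cq Y F * (Y i : ℂ) * (Y j : ℂ) + (1/2) * cq Y F * kd i j
      + (1/2) * ct F * (Y i : ℂ) * (Y j : ℂ) - (1/6) * ct F * kd i j := by
  rw [hT]
  simp only [cv, cw, cq, ct, Tcoef, Fin.sum_univ_three]
  fin_cases i <;> fin_cases j <;> simp [kd] <;> ring

lemma Bv (hY : (Y 0 : ℂ) * (Y 0 : ℂ) + (Y 1 : ℂ) * (Y 1 : ℂ) + (Y 2 : ℂ) * (Y 2 : ℂ) = 1)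
    (hT : ∀ (E : Tens2) (i j : Fin 3), T E i j = ∑ k, ∑ l, Tcoef Y k l i j * E k l)
    (E : Tens2) (j : Fin 3) :
    cv Y (T E) j = (3/8) * (cv Y E j + cw Y E j) + ((-7/4) * cq Y E + (1/3) * ct E) * (Y j : ℂ) := by
  simp only [cv, cw, cq, ct, hT, Tcoef, Fin.sum_univ_three]
  fin_cases j
  · simp [kd]
    linear_combination (((3/8) * (Y 2 : ℂ) * E 2 0 + (3/8) * (Y 2 : ℂ) * E 0 2 + (3/8) * (Y 1 : ℂ) * E 1 0 + (3/8) * (Y 1 : ℂ) * E 0 1 + (1/2) * (Y 0 : ℂ) * E 2 2 + (1/2) * (Y 0 : ℂ) * E 1 1 + (5/4) * (Y 0 : ℂ) * E 0 0 + (-3) * (Y 0 : ℂ) * (Y 2 : ℂ) * (Y 2 : ℂ) * E 2 2 + (-3) * (Y 0 : ℂ) * (Y 1 : ℂ) * (Y 2 : ℂ) * E 2 1 + (-3) * (Y 0 : ℂ) * (Y 1 : ℂ) * (Y 2 : ℂ) * E 1 2 + (-3) * (Y 0 : ℂ) * (Y 1 : ℂ) * (Y 1 : ℂ) * E 1 1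 + (-3) * (Y 0 : ℂ) * (Y 0 : ℂ) * (Y 2 : ℂ) * E 2 0 + (-3) * (Y 0 : ℂ) * (Y 0 : ℂ) * (Y 2 : ℂ) * E 0 2 + (-3) * (Y 0 : ℂ) * (Y 0 : ℂ) * (Y 1 : ℂ) * E 1 0 + (-3) * (Y 0 : ℂ) * (Y 0 : ℂ) * (Y 1 : ℂ) * E 0 1 + (-3) * (Y 0 : ℂ) * (Y 0 : ℂ) * (Y 0 : ℂ) * E 0 0)) * hY
  · simp [kd]
    linear_combination (((3/8) * (Y 2 : ℂ) * E 2 1 + (3/8) * (Y 2 : ℂ) * E 1 2 + (1/2) * (Y 1 : ℂ) * E 2 2 + (5/4) * (Y 1 : ℂ) * E 1 1 + (1/2) * (Y 1 : ℂ) * E 0 0 + (-3) * (Y 1 : ℂ) * (Y 2 : ℂ) * (Y 2 : ℂ) * E 2 2 + (-3) * (Y 1 : ℂ) * (Y 1 : ℂ) * (Y 2 : ℂ) * E 2 1 + (-3) * (Y 1 : ℂ) * (Y 1 : ℂ) * (Y 2 : ℂ) * E 1 2 + (-3) * (Y 1 : ℂ) * (Y 1 : ℂ) * (Y 1 : ℂ)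 * E 1 1 + (3/8) * (Y 0 : ℂ) * E 1 0 + (3/8) * (Y 0 : ℂ) * E 0 1 + (-3) * (Y 0 : ℂ) * (Y 1 : ℂ) * (Y 2 : ℂ) * E 2 0 + (-3) * (Y 0 : ℂ) * (Y 1 : ℂ) * (Y 2 : ℂ) * E 0 2 + (-3) * (Y 0 : ℂ) * (Y 1 : ℂ) * (Y 1 : ℂ) * E 1 0 + (-3) * (Y 0 : ℂ) * (Y 1 : ℂ) * (Y 1 : ℂ) * E 0 1 + (-3) * (Y 0 : ℂ) * (Y 0 : ℂ) * (Y 1 : ℂ) * E 0 0)) * hY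
  · simp [kd]
    linear_combination (((5/4) * (Y 2 : ℂ) * E 2 2 + (1/2) * (Y 2 : ℂ) * E 1 1 + (1/2) * (Y 2 : ℂ) * E 0 0 + (-3) * (Y 2 : ℂ) * (Y 2 : ℂ) * (Y 2 : ℂ) * E 2 2 + (3/8) * (Y 1 : ℂ) * E 2 1 + (3/8) * (Y 1 : ℂ) * E 1 2 + (-3) * (Y 1 : ℂ) * (Y 2 : ℂ) * (Y 2 : ℂ) * E 2 1 + (-3) * (Y 1 : ℂ) * (Y 2 : ℂ) * (Y 2 : ℂ) * E 1 2 + (-3) * (Y 1 : ℂ) * (Y 1 : ℂ) * (Y 2 : ℂ) * E 1 1 + (3/8) * (Y 0 : ℂ) * E 2 0 + (3/8) * (Y 0 : ℂ) * E 0 2 + (-3) * (Y 0 : ℂ) * (Y 2 : ℂ) * (Y 2 : ℂ) * E 2 0 + (-3) * (Y 0 : ℂ) * (Y 2 : ℂ) * (Y 2 : ℂ) * E 0 2 + (-3) * (Y 0 : ℂ) * (Y 1 : ℂ) * (Y 2 : ℂ) * E 1 0 + (-3) * (Y 0 : ℂ) * (Y 1 : ℂ) * (Y 2 : ℂ) *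 E 0 1 + (-3) * (Y 0 : ℂ) * (Y 0 : ℂ) * (Y 2 : ℂ) * E 0 0)) * hY

lemma Bw (hY : (Y 0 : ℂ) * (Y 0 : ℂ) + (Y 1 : ℂ) * (Y 1 : ℂ) + (Y 2 : ℂ) * (Y 2 : ℂ) = 1)
    (hT : ∀ (E : Tens2) (i j : Fin 3), T E i j = ∑ k, ∑ l, Tcoef Y k l i j * E k l)
    (E : Tens2) (j : Fin 3) :
    cw Y (T E) j = (3/8) * (cv Y E j + cw Y E j) + ((-7/4) * cq Y E + (1/3) * ct E) * (Y j : ℂ) := by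
  simp only [cv, cw, cq, ct, hT, Tcoef, Fin.sum_univ_three]
  fin_cases j
  · simp [kd]
    linear_combination (((3/8) * (Y 2 : ℂ) * E 2 0 + (3/8) * (Y 2 : ℂ) * E 0 2 + (3/8) * (Y 1 : ℂ) * E 1 0 + (3/8) * (Y 1 : ℂ) * E 0 1 + (1/2) * (Y 0 : ℂ) * E 2 2 + (1/2) * (Y 0 : ℂ) * E 1 1 + (5/4) * (Y 0 : ℂ) * E 0 0 + (-3) * (Y 0 : ℂ) * (Y 2 : ℂ) * (Y 2 : ℂ) * E 2 2 + (-3) * (Y 0 : ℂ) * (Y 1 : ℂ) * (Y 2 : ℂ) * E 2 1 + (-3) * (Y 0 : ℂ) * (Y 1 : ℂ) * (Y 2 : ℂ) * E 1 2 + (-3) * (Y 0 : ℂ) * (Y 1 : ℂ) * (Y 1 : ℂ) * E 1 1 + (-3) * (Y 0 : ℂ) * (Y 0 : ℂ) * (Y 2 : ℂ) * E 2 0 + (-3) * (Y 0 : ℂ) * (Y 0 : ℂ) * (Y 2 : ℂ) * E 0 2 + (-3) * (Y 0 : ℂ) * (Y 0 : ℂ) * (Y 1 : ℂ) * E 1 0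 + (-3) * (Y 0 : ℂ) * (Y 0 : ℂ) * (Y 1 : ℂ) * E 0 1 + (-3) * (Y 0 : ℂ) * (Y 0 : ℂ) * (Y 0 : ℂ) * E 0 0)) * hY
  · simp [kd]
    linear_combination (((3/8) * (Y 2 : ℂ) * E 2 1 + (3/8) * (Y 2 : ℂ) * E 1 2 + (1/2) * (Y 1 : ℂ) * E 2 2 + (5/4) * (Y 1 : ℂ) * E 1 1 + (1/2) * (Y 1 : ℂ) * E 0 0 + (-3) * (Y 1 : ℂ) * (Y 2 : ℂ) * (Y 2 : ℂ) * E 2 2 + (-3) * (Y 1 : ℂ) * (Y 1 : ℂ) * (Y 2 : ℂ) * E 2 1 + (-3) * (Y 1 : ℂ) * (Y 1 : ℂ) * (Y 2 : ℂ) * E 1 2 + (-3) * (Y 1 : ℂ) * (Y 1 : ℂ) * (Y 1 : ℂ) * E 1 1 + (3/8) * (Y 0 : ℂ) * E 1 0 + (3/8) * (Y 0 : ℂ) * E 0 1 + (-3) * (Y 0 : ℂ) * (Y 1 : ℂ) * (Y 2 : ℂ) * E 2 0 + (-3) * (Y 0 : ℂ) * (Y 1 : ℂ) * (Y 2 : ℂ)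 * E 0 2 + (-3) * (Y 0 : ℂ) * (Y 1 : ℂ) * (Y 1 : ℂ) * E 1 0 + (-3) * (Y 0 : ℂ) * (Y 1 : ℂ) * (Y 1 : ℂ) * E 0 1 + (-3) * (Y 0 : ℂ) * (Y 0 : ℂ) * (Y 1 : ℂ) * E 0 0)) * hY
  · simp [kd]
    linear_combination (((5/4) * (Y 2 : ℂ) * E 2 2 + (1/2) * (Y 2 : ℂ) * E 1 1 + (1/2) * (Y 2 : ℂ) * E 0 0 + (-3) * (Y 2 : ℂ) * (Y 2 : ℂ) * (Y 2 : ℂ) * E 2 2 + (3/8) * (Y 1 : ℂ) * E 2 1 + (3/8) * (Y 1 : ℂ) * E 1 2 + (-3) * (Y 1 : ℂ) * (Y 2 : ℂ) * (Y 2 : ℂ) * E 2 1 + (-3) * (Y 1 : ℂ) * (Y 2 : ℂ) * (Y 2 : ℂ) * E 1 2 + (-3) * (Y 1 : ℂ) * (Y 1 : ℂ) * (Y 2 : ℂ) * E 1 1 + (3/8) * (Y 0 : ℂ) * E 2 0 + (3/8) * (Y 0 : ℂ) * E 0 2 + (-3) * (Y 0 : ℂ) * (Y 2 : ℂ) * (Y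 2 : ℂ) * E 2 0 + (-3) * (Y 0 : ℂ) * (Y 2 : ℂ) * (Y 2 : ℂ) * E 0 2 + (-3) * (Y 0 : ℂ) * (Y 1 : ℂ) * (Y 2 : ℂ) * E 1 0 + (-3) * (Y 0 : ℂ) * (Y 1 : ℂ) * (Y 2 : ℂ) * E 0 1 + (-3) * (Y 0 : ℂ) * (Y 0 : ℂ) * (Y 2 : ℂ) * E 0 0)) * hY

lemma Bq (hY : (Y 0 : ℂ) * (Y 0 : ℂ) + (Y 1 : ℂ) * (Y 1 : ℂ) + (Y 2 : ℂ) * (Y 2 : ℂ) = 1)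
    (hT : ∀ (E : Tens2) (i j : Fin 3), T E i j = ∑ k, ∑ l, Tcoef Y k l i j * E k l)
    (E : Tens2) :
    cq Y (T E) = -cq Y E + (1/3) * ct E := by
  simp only [cv, cw, cq, ct, hT, Tcoef, Fin.sum_univ_three]
  simp [kd]
  linear_combination (((1/3) * E 2 2 + (1/3) * E 1 1 + (1/3) * E 0 0 + (-1/2) * (Y 2 : ℂ) * (Y 2 : ℂ) * E 2 2 + (1/2) * (Y 2 : ℂ) * (Y 2 : ℂ) * E 1 1 + (1/2) * (Y 2 : ℂ) * (Y 2 : ℂ) * E 0 0 + (-3) * (Y 2 : ℂ) * (Y 2 : ℂ) * (Y 2 : ℂ) * (Y 2 : ℂ) * E 2 2 + (-1) * (Y 1 : ℂ) * (Y 2 : ℂ) * E 2 1 + (-1) * (Y 1 : ℂ) * (Y 2 : ℂ) * E 1 2 + (-3) * (Y 1 : ℂ) * (Y 2 : ℂ) * (Y 2 : ℂ) * (Y 2 : ℂ) * E 2 1 + (-3) * (Y 1 : ℂ) * (Y 2 : ℂ) * (Y 2 : ℂ) * (Y 2 : ℂ) * E 1 2 + (1/2) * (Y 1 : ℂ) *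 (Y 1 : ℂ) * E 2 2 + (-1/2) * (Y 1 : ℂ) * (Y 1 : ℂ) * E 1 1 + (1/2) * (Y 1 : ℂ) * (Y 1 : ℂ) * E 0 0 + (-3) * (Y 1 : ℂ) * (Y 1 : ℂ) * (Y 2 : ℂ) * (Y 2 : ℂ) * E 2 2 + (-3) * (Y 1 : ℂ) * (Y 1 : ℂ) * (Y 2 : ℂ) * (Y 2 : ℂ) * E 1 1 + (-3) * (Y 1 : ℂ) * (Y 1 : ℂ) * (Y 1 : ℂ) * (Y 2 : ℂ) * E 2 1 + (-3) * (Y 1 : ℂ) * (Y 1 : ℂ) * (Y 1 : ℂ) * (Y 2 : ℂ) * E 1 2 + (-3) * (Y 1 : ℂ) * (Y 1 : ℂ) * (Y 1 : ℂ) * (Y 1 : ℂ) * E 1 1 + (-1) * (Y 0 : ℂ) * (Y 2 : ℂ) * E 2 0 + (-1) * (Y 0 : ℂ) * (Y 2 : ℂ) * E 0 2 + (-3) * (Y 0 : ℂ) * (Y 2 : ℂ) * (Y 2 : ℂ) * (Y 2 : ℂ) * E 2 0 + (-3) * (Y 0 : ℂ) * (Y 2 : ℂ) * (Y 2 : ℂ)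 * (Y 2 : ℂ) * E 0 2 + (-1) * (Y 0 : ℂ) * (Y 1 : ℂ) * E 1 0 + (-1) * (Y 0 : ℂ) * (Y 1 : ℂ) * E 0 1 + (-3) * (Y 0 : ℂ) * (Y 1 : ℂ) * (Y 2 : ℂ) * (Y 2 : ℂ) * E 1 0 + (-3) * (Y 0 : ℂ) * (Y 1 : ℂ) * (Y 2 : ℂ) * (Y 2 : ℂ) * E 0 1 + (-3) * (Y 0 : ℂ) * (Y 1 : ℂ) * (Y 1 : ℂ) * (Y 2 : ℂ) * E 2 0 + (-3) * (Y 0 : ℂ) * (Y 1 : ℂ) * (Y 1 : ℂ) * (Y 2 : ℂ) * E 0 2 + (-3) * (Y 0 : ℂ) * (Y 1 : ℂ) * (Y 1 : ℂ) * (Y 1 : ℂ) * E 1 0 + (-3) * (Y 0 : ℂ) * (Y 1 : ℂ) * (Y 1 : ℂ) * (Y 1 : ℂ) * E 0 1 + (1/2) * (Y 0 : ℂ) * (Y 0 : ℂ) * E 2 2 + (1/2) * (Y 0 : ℂ) * (Y 0 : ℂ) * E 1 1 + (-1/2) * (Y 0 : ℂ) * (Y 0 : ℂ) * E 0 0 +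 (-3) * (Y 0 : ℂ) * (Y 0 : ℂ) * (Y 2 : ℂ) * (Y 2 : ℂ) * E 2 2 + (-3) * (Y 0 : ℂ) * (Y 0 : ℂ) * (Y 2 : ℂ) * (Y 2 : ℂ) * E 0 0 + (-3) * (Y 0 : ℂ) * (Y 0 : ℂ) * (Y 1 : ℂ) * (Y 2 : ℂ) * E 2 1 + (-3) * (Y 0 : ℂ) * (Y 0 : ℂ) * (Y 1 : ℂ) * (Y 2 : ℂ) * E 1 2 + (-3) * (Y 0 : ℂ) * (Y 0 : ℂ) * (Y 1 : ℂ) * (Y 1 : ℂ) * E 1 1 + (-3) * (Y 0 : ℂ) * (Y 0 : ℂ) * (Y 1 : ℂ) * (Y 1 : ℂ) * E 0 0 + (-3) * (Y 0 : ℂ) * (Y 0 : ℂ) * (Y 0 : ℂ) * (Y 2 : ℂ) * E 2 0 + (-3) * (Y 0 : ℂ) * (Y 0 : ℂ) * (Y 0 : ℂ) * (Y 2 : ℂ) * E 0 2 + (-3) * (Y 0 : ℂ) * (Y 0 : ℂ) * (Y 0 : ℂ) * (Y 1 : ℂ) * E 1 0 + (-3) * (Y 0 : ℂ) * (Y 0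 : ℂ) * (Y 0 : ℂ) * (Y 1 : ℂ) * E 0 1 + (-3) * (Y 0 : ℂ) * (Y 0 : ℂ) * (Y 0 : ℂ) * (Y 0 : ℂ) * E 0 0)) * hY

lemma Bt (hY : (Y 0 : ℂ) * (Y 0 : ℂ) + (Y 1 : ℂ) * (Y 1 : ℂ) + (Y 2 : ℂ) * (Y 2 : ℂ) = 1)
    (hT : ∀ (E : Tens2) (i j : Fin 3), T E i j = ∑ k, ∑ l, Tcoef Y k l i j * E k l)
    (E : Tens2) :
    ct (T E) = 0 := by
  simp only [cv, cw, cq, ct, hT, Tcoef, Fin.sum_univ_three]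
  simp [kd]
  linear_combination (((1/2) * E 2 2 + (1/2) * E 1 1 + (1/2) * E 0 0 + (-3) * (Y 2 : ℂ) * (Y 2 : ℂ) * E 2 2 + (-3) * (Y 1 : ℂ) * (Y 2 : ℂ) * E 2 1 + (-3) * (Y 1 : ℂ) * (Y 2 : ℂ) * E 1 2 + (-3) * (Y 1 : ℂ) * (Y 1 : ℂ) * E 1 1 + (-3) * (Y 0 : ℂ) * (Y 2 : ℂ) * E 2 0 + (-3) * (Y 0 : ℂ) * (Y 2 : ℂ) * E 0 2 + (-3) * (Y 0 : ℂ) * (Y 1 : ℂ) * E 1 0 + (-3) * (Y 0 : ℂ) * (Y 1 : ℂ) * E 0 1 + (-3) * (Y 0 : ℂ) * (Y 0 : ℂ) * E 0 0)) * hY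

lemma cubic (hY : (Y 0 : ℂ) * (Y 0 : ℂ) + (Y 1 : ℂ) * (Y 1 : ℂ) + (Y 2 : ℂ) * (Y 2 : ℂ) = 1)
    (hT : ∀ (E : Tens2) (i j : Fin 3), T E i j = ∑ k, ∑ l, Tcoef Y k l i j * E k l)
    (E : Tens2) (i j : Fin 3) :
    T (T (T E)) i j + (1/4) * T (T E) i j = (3/4) * T E i j := by
  simp only [lemA hT, Bv hY hT, Bw hY hT, Bq hY hT, Bt hY hT]
  ring

lemma PnegMem (hY : (Y 0 : ℂ) * (Y 0 : ℂ) + (Y 1 : ℂ) * (Y 1 : ℂ) + (Y 2 : ℂ) * (Y 2 : ℂ) = 1)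
    (hT : ∀ (E : Tens2) (i j : Fin 3), T E i j = ∑ k, ∑ l, Tcoef Y k l i j * E k l) :
    PnegT Y ∈ Module.End.eigenspace T (-1) := by
  rw [Module.End.mem_eigenspace_iff]
  funext i j
  simp only [Pi.smul_apply, smul_eq_mul, hT, PnegT, Tcoef, Fin.sum_univ_three]
  fin_cases i <;> fin_cases j
  · simp [kd]
    linear_combination (((1/6) + (1/2) * (Y 2 : ℂ) * (Y 2 : ℂ) + (1/2) * (Y 1 : ℂ) * (Y 1 : ℂ) + (1/2) * (Y 0 : ℂ) * (Y 0 : ℂ) + (-3) * (Y 0 : ℂ) * (Y 0 : ℂ) * (Y 2 : ℂ) * (Y 2 : ℂ) + (-3) * (Y 0 : ℂ) * (Y 0 : ℂ) * (Y 1 : ℂ) * (Y 1 : ℂ) + (-3) * (Y 0 : ℂ) * (Y 0 : ℂ) * (Y 0 : ℂ) * (Y 0 : ℂ))) * hY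
  · simp [kd]
    linear_combination (((-3) * (Y 0 : ℂ) * (Y 1 : ℂ) * (Y 2 : ℂ) * (Y 2 : ℂ) + (-3) * (Y 0 : ℂ) * (Y 1 : ℂ) * (Y 1 : ℂ) * (Y 1 : ℂ) + (-3) * (Y 0 : ℂ) * (Y 0 : ℂ) * (Y 0 : ℂ) * (Y 1 : ℂ))) * hY
  · simp [kd]
    linear_combination (((-3) * (Y 0 : ℂ) * (Y 2 : ℂ) * (Y 2 : ℂ) * (Y 2 : ℂ) + (-3) * (Y 0 : ℂ) * (Y 1 : ℂ) * (Y 1 : ℂ) * (Y 2 : ℂ) + (-3) * (Y 0 : ℂ) * (Y 0 : ℂ) * (Y 0 : ℂ) * (Y 2 : ℂ))) * hY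
  · simp [kd]
    linear_combination (((-3) * (Y 0 : ℂ) * (Y 1 : ℂ) * (Y 2 : ℂ) * (Y 2 : ℂ) + (-3) * (Y 0 : ℂ) * (Y 1 : ℂ) * (Y 1 : ℂ) * (Y 1 : ℂ) + (-3) * (Y 0 : ℂ) * (Y 0 : ℂ) * (Y 0 : ℂ) * (Y 1 : ℂ))) * hY
  · simp [kd]
    linear_combination (((1/6) + (1/2) * (Y 2 : ℂ) * (Y 2 : ℂ) + (1/2) * (Y 1 : ℂ) * (Y 1 : ℂ) + (-3) * (Y 1 : ℂ) * (Y 1 : ℂ) * (Y 2 : ℂ) * (Y 2 : ℂ) + (-3) * (Y 1 : ℂ) * (Y 1 : ℂ) * (Y 1 : ℂ) * (Y 1 : ℂ) + (1/2) * (Y 0 : ℂ) * (Y 0 : ℂ) + (-3) * (Y 0 : ℂ) * (Y 0 : ℂ) * (Y 1 : ℂ) * (Y 1 : ℂ))) * hY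
  · simp [kd]
    linear_combination (((-3) * (Y 1 : ℂ) * (Y 2 : ℂ) * (Y 2 : ℂ) * (Y 2 : ℂ) + (-3) * (Y 1 : ℂ) * (Y 1 : ℂ) * (Y 1 : ℂ) * (Y 2 : ℂ) + (-3) * (Y 0 : ℂ) * (Y 0 : ℂ) * (Y 1 : ℂ) * (Y 2 : ℂ))) * hY
  · simp [kd]
    linear_combination (((-3) * (Y 0 : ℂ) * (Y 2 : ℂ) * (Y 2 : ℂ) * (Y 2 : ℂ) + (-3) * (Y 0 : ℂ) * (Y 1 : ℂ) * (Y 1 : ℂ) * (Y 2 : ℂ) + (-3) * (Y 0 : ℂ) * (Y 0 : ℂ) * (Y 0 : ℂ) * (Y 2 : ℂ))) * hY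
  · simp [kd]
    linear_combination (((-3) * (Y 1 : ℂ) * (Y 2 : ℂ) * (Y 2 : ℂ) * (Y 2 : ℂ) + (-3) * (Y 1 : ℂ) * (Y 1 : ℂ) * (Y 1 : ℂ) * (Y 2 : ℂ) + (-3) * (Y 0 : ℂ) * (Y 0 : ℂ) * (Y 1 : ℂ) * (Y 2 : ℂ))) * hY
  · simp [kd]
    linear_combination (((1/6) + (1/2) * (Y 2 : ℂ) * (Y 2 : ℂ) + (-3) * (Y 2 : ℂ) * (Y 2 : ℂ) * (Y 2 : ℂ) * (Y 2 : ℂ) + (1/2) * (Y 1 : ℂ) * (Y 1 : ℂ) + (-3) * (Y 1 : ℂ) * (Y 1 : ℂ) * (Y 2 : ℂ) * (Y 2 : ℂ) + (1/2) * (Y 0 : ℂ) * (Y 0 : ℂ) + (-3) * (Y 0 : ℂ) * (Y 0 : ℂ) * (Y 2 : ℂ) * (Y 2 : ℂ))) * hY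

lemma PnegNe : PnegT Y ≠ 0 := by
  intro h
  have h00 := congrFun (congrFun h 0) 0
  have h11 := congrFun (congrFun h 1) 1
  have h01 := congrFun (congrFun h 0) 1
  simp only [PnegT, Pi.zero_apply, kd] at h00 h11 h01
  norm_num at h00 h11 h01
  rcases h01 with h01 | h01
  · rw [h01] at h00
    norm_num at h00
  · rw [h01] at h11
    norm_num at h11

lemma LmapEig (hY : (Y 0 : ℂ) * (Y 0 : ℂ) + (Y 1 : ℂ) * (Y 1 : ℂ) + (Y 2 : ℂ) * (Y 2 : ℂ) = 1)
    (hT : ∀ (E : Tens2) (i j : Fin 3), T E i j = ∑ k, ∑ l, Tcoef Y k l i j * E k l)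
    (X : Fin 3 → ℂ) :
    Lmap Y X ∈ Module.End.eigenspace T (3/4) := by
  rw [Module.End.mem_eigenspace_iff]
  funext i j
  simp only [Pi.smul_apply, smul_eq_mul, hT, Lmap, Lfun, LinearMap.coe_mk, AddHom.coe_mk,
    Tcoef, Fin.sum_univ_three]
  fin_cases i <;> fin_cases j
  · simp [kd]
    linear_combination (((1/3) * (Y 2 : ℂ) * X 2 + (-1) * (Y 2 : ℂ) * (Y 2 : ℂ) * (Y 2 : ℂ) * X 2 + (1/3) * (Y 1 : ℂ) * X 1 + (-1) * (Y 1 : ℂ) * (Y 2 : ℂ) * (Y 2 : ℂ) * X 1 + (-1) * (Y 1 : ℂ) * (Y 1 : ℂ) * (Y 2 : ℂ) * X 2 + (-1) * (Y 1 : ℂ) * (Y 1 : ℂ) * (Y 1 : ℂ) * X 1 + (11/6) * (Y 0 : ℂ) * X 0 + (-1) * (Y 0 : ℂ) * (Y 2 : ℂ) * (Y 2 : ℂ) * X 0 + (-1) * (Y 0 : ℂ) * (Y 1 : ℂ) * (Y 1 : ℂ) * X 0 + (-5) * (Y 0 : ℂ) * (Y 0 : ℂ) * (Y 2 : ℂ)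 * X 2 + (6) * (Y 0 : ℂ) * (Y 0 : ℂ) * (Y 2 : ℂ) * (Y 2 : ℂ) * (Y 2 : ℂ) * X 2 + (-5) * (Y 0 : ℂ) * (Y 0 : ℂ) * (Y 1 : ℂ) * X 1 + (6) * (Y 0 : ℂ) * (Y 0 : ℂ) * (Y 1 : ℂ) * (Y 2 : ℂ) * (Y 2 : ℂ) * X 1 + (6) * (Y 0 : ℂ) * (Y 0 : ℂ) * (Y 1 : ℂ) * (Y 1 : ℂ) * (Y 2 : ℂ) * X 2 + (6) * (Y 0 : ℂ) * (Y 0 : ℂ) * (Y 1 : ℂ) * (Y 1 : ℂ) * (Y 1 : ℂ) * X 1 + (-5) * (Y 0 : ℂ) * (Y 0 : ℂ) * (Y 0 : ℂ) * X 0 + (6) * (Y 0 : ℂ) * (Y 0 : ℂ) * (Y 0 : ℂ) * (Y 2 : ℂ) * (Y 2 : ℂ) * X 0 + (6) * (Y 0 : ℂ) * (Y 0 : ℂ) * (Y 0 : ℂ) * (Y 1 : ℂ) * (Y 1 : ℂ) * X 0 + (6) * (Y 0 : ℂ) * (Y 0 : ℂ) * (Y 0 : ℂ) * (Y 0 : ℂ)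 * (Y 2 : ℂ) * X 2 + (6) * (Y 0 : ℂ) * (Y 0 : ℂ) * (Y 0 : ℂ) * (Y 0 : ℂ) * (Y 1 : ℂ) * X 1 + (6) * (Y 0 : ℂ) * (Y 0 : ℂ) * (Y 0 : ℂ) * (Y 0 : ℂ) * (Y 0 : ℂ) * X 0)) * hY
  · simp [kd]
    linear_combination (((3/4) * (Y 1 : ℂ) * X 0 + (3/4) * (Y 0 : ℂ) * X 1 + (-4) * (Y 0 : ℂ) * (Y 1 : ℂ) * (Y 2 : ℂ) * X 2 + (6) * (Y 0 : ℂ) * (Y 1 : ℂ) * (Y 2 : ℂ) * (Y 2 : ℂ) * (Y 2 : ℂ) * X 2 + (-4) * (Y 0 : ℂ) * (Y 1 : ℂ) * (Y 1 : ℂ) * X 1 + (6) * (Y 0 : ℂ) * (Y 1 : ℂ) * (Y 1 : ℂ) * (Y 2 : ℂ) * (Y 2 : ℂ) * X 1 + (6) * (Y 0 : ℂ) * (Y 1 : ℂ) * (Y 1 : ℂ) * (Y 1 : ℂ) * (Y 2 : ℂ) * X 2 + (6) * (Y 0 : ℂ) * (Y 1 : ℂ) * (Y 1 : ℂ) * (Y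 1 : ℂ) * (Y 1 : ℂ) * X 1 + (-4) * (Y 0 : ℂ) * (Y 0 : ℂ) * (Y 1 : ℂ) * X 0 + (6) * (Y 0 : ℂ) * (Y 0 : ℂ) * (Y 1 : ℂ) * (Y 2 : ℂ) * (Y 2 : ℂ) * X 0 + (6) * (Y 0 : ℂ) * (Y 0 : ℂ) * (Y 1 : ℂ) * (Y 1 : ℂ) * (Y 1 : ℂ) * X 0 + (6) * (Y 0 : ℂ) * (Y 0 : ℂ) * (Y 0 : ℂ) * (Y 1 : ℂ) * (Y 2 : ℂ) * X 2 + (6) * (Y 0 : ℂ) * (Y 0 : ℂ) * (Y 0 : ℂ) * (Y 1 : ℂ) * (Y 1 : ℂ) * X 1 + (6) * (Y 0 : ℂ) * (Y 0 : ℂ) * (Y 0 : ℂ) * (Y 0 : ℂ) * (Y 1 : ℂ) * X 0)) * hY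
  · simp [kd]
    linear_combination (((3/4) * (Y 2 : ℂ) * X 0 + (3/4) * (Y 0 : ℂ) * X 2 + (-4) * (Y 0 : ℂ) * (Y 2 : ℂ) * (Y 2 : ℂ) * X 2 + (6) * (Y 0 : ℂ) * (Y 2 : ℂ) * (Y 2 : ℂ) * (Y 2 : ℂ) * (Y 2 : ℂ) * X 2 + (-4) * (Y 0 : ℂ) * (Y 1 : ℂ) * (Y 2 : ℂ) * X 1 + (6) * (Y 0 : ℂ) * (Y 1 : ℂ) * (Y 2 : ℂ) * (Y 2 : ℂ) * (Y 2 : ℂ) * X 1 + (6) * (Y 0 : ℂ) * (Y 1 : ℂ) * (Y 1 : ℂ) * (Y 2 : ℂ) * (Y 2 : ℂ) * X 2 + (6) * (Y 0 : ℂ) * (Y 1 : ℂ) * (Y 1 : ℂ) * (Y 1 : ℂ) * (Y 2 : ℂ) * X 1 + (-4) * (Y 0 : ℂ) * (Y 0 : ℂ) * (Y 2 : ℂ) * X 0 + (6) * (Y 0 : ℂ) * (Y 0 : ℂ) * (Y 2 : ℂ) * (Y 2 : ℂ) * (Y 2 : ℂ) * X 0 + (6) * (Y 0 : ℂ) * (Y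 0 : ℂ) * (Y 1 : ℂ) * (Y 1 : ℂ) * (Y 2 : ℂ) * X 0 + (6) * (Y 0 : ℂ) * (Y 0 : ℂ) * (Y 0 : ℂ) * (Y 2 : ℂ) * (Y 2 : ℂ) * X 2 + (6) * (Y 0 : ℂ) * (Y 0 : ℂ) * (Y 0 : ℂ) * (Y 1 : ℂ) * (Y 2 : ℂ) * X 1 + (6) * (Y 0 : ℂ) * (Y 0 : ℂ) * (Y 0 : ℂ) * (Y 0 : ℂ) * (Y 2 : ℂ) * X 0)) * hY
  · simp [kd]
    linear_combination (((3/4) * (Y 1 : ℂ) * X 0 + (3/4) * (Y 0 : ℂ) * X 1 + (-4) * (Y 0 : ℂ) * (Y 1 : ℂ) * (Y 2 : ℂ) * X 2 + (6) * (Y 0 : ℂ) * (Y 1 : ℂ) * (Y 2 : ℂ) * (Y 2 : ℂ) * (Y 2 : ℂ) * X 2 + (-4) * (Y 0 : ℂ) * (Y 1 : ℂ) * (Y 1 : ℂ) * X 1 + (6) * (Y 0 : ℂ) * (Y 1 : ℂ) * (Y 1 : ℂ) * (Y 2 : ℂ) * (Y 2 : ℂ) * X 1 + (6) * (Y 0 :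 ℂ) * (Y 1 : ℂ) * (Y 1 : ℂ) * (Y 1 : ℂ) * (Y 2 : ℂ) * X 2 + (6) * (Y 0 : ℂ) * (Y 1 : ℂ) * (Y 1 : ℂ) * (Y 1 : ℂ) * (Y 1 : ℂ) * X 1 + (-4) * (Y 0 : ℂ) * (Y 0 : ℂ) * (Y 1 : ℂ) * X 0 + (6) * (Y 0 : ℂ) * (Y 0 : ℂ) * (Y 1 : ℂ) * (Y 2 : ℂ) * (Y 2 : ℂ) * X 0 + (6) * (Y 0 : ℂ) * (Y 0 : ℂ) * (Y 1 : ℂ) * (Y 1 : ℂ) * (Y 1 : ℂ) * X 0 + (6) * (Y 0 : ℂ) * (Y 0 : ℂ) * (Y 0 : ℂ) * (Y 1 : ℂ) * (Y 2 : ℂ) * X 2 + (6) * (Y 0 : ℂ) * (Y 0 : ℂ) * (Y 0 : ℂ) * (Y 1 : ℂ) * (Y 1 : ℂ) * X 1 + (6) * (Y 0 : ℂ) * (Y 0 : ℂ) * (Y 0 : ℂ) * (Y 0 : ℂ) * (Y 1 : ℂ) * X 0)) * hY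
  · simp [kd]
    linear_combination (((1/3) * (Y 2 : ℂ) * X 2 + (-1) * (Y 2 : ℂ) * (Y 2 : ℂ) * (Y 2 : ℂ) * X 2 + (11/6) * (Y 1 : ℂ) * X 1 + (-1) * (Y 1 : ℂ) * (Y 2 : ℂ) * (Y 2 : ℂ) * X 1 + (-5) * (Y 1 : ℂ) * (Y 1 : ℂ) * (Y 2 : ℂ) * X 2 + (6) * (Y 1 : ℂ) * (Y 1 : ℂ) * (Y 2 : ℂ) * (Y 2 : ℂ) * (Y 2 : ℂ) * X 2 + (-5) * (Y 1 : ℂ) * (Y 1 : ℂ) * (Y 1 : ℂ) * X 1 + (6) * (Y 1 : ℂ) * (Y 1 : ℂ) * (Y 1 : ℂ) * (Y 2 : ℂ) * (Y 2 : ℂ) * X 1 + (6) * (Y 1 : ℂ) * (Y 1 : ℂ) * (Y 1 : ℂ) * (Y 1 : ℂ) * (Y 2 : ℂ) * X 2 + (6) * (Y 1 : ℂ) * (Y 1 : ℂ) * (Y 1 : ℂ) * (Y 1 : ℂ) * (Y 1 : ℂ) * X 1 + (1/3) * (Y 0 : ℂ) * X 0 + (-1) * (Y 0 : ℂ) * (Y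 2 : ℂ) * (Y 2 : ℂ) * X 0 + (-5) * (Y 0 : ℂ) * (Y 1 : ℂ) * (Y 1 : ℂ) * X 0 + (6) * (Y 0 : ℂ) * (Y 1 : ℂ) * (Y 1 : ℂ) * (Y 2 : ℂ) * (Y 2 : ℂ) * X 0 + (6) * (Y 0 : ℂ) * (Y 1 : ℂ) * (Y 1 : ℂ) * (Y 1 : ℂ) * (Y 1 : ℂ) * X 0 + (-1) * (Y 0 : ℂ) * (Y 0 : ℂ) * (Y 2 : ℂ) * X 2 + (-1) * (Y 0 : ℂ) * (Y 0 : ℂ) * (Y 1 : ℂ) * X 1 + (6) * (Y 0 : ℂ) * (Y 0 : ℂ) * (Y 1 : ℂ) * (Y 1 : ℂ) * (Y 2 : ℂ) * X 2 + (6) * (Y 0 : ℂ) * (Y 0 : ℂ) * (Y 1 : ℂ) * (Y 1 : ℂ) * (Y 1 : ℂ) * X 1 + (-1) * (Y 0 : ℂ) * (Y 0 : ℂ) * (Y 0 : ℂ) * X 0 + (6) * (Y 0 : ℂ) * (Y 0 : ℂ) * (Y 0 : ℂ) * (Y 1 : ℂ) * (Y 1 : ℂ) * X 0)) * hY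
  · simp [kd]
    linear_combination (((3/4) * (Y 2 : ℂ) * X 1 + (3/4) * (Y 1 : ℂ) * X 2 + (-4) * (Y 1 : ℂ) * (Y 2 : ℂ) * (Y 2 : ℂ) * X 2 + (6) * (Y 1 : ℂ) * (Y 2 : ℂ) * (Y 2 : ℂ) * (Y 2 : ℂ) * (Y 2 : ℂ) * X 2 + (-4) * (Y 1 : ℂ) * (Y 1 : ℂ) * (Y 2 : ℂ) * X 1 + (6) * (Y 1 : ℂ) * (Y 1 : ℂ) * (Y 2 : ℂ) * (Y 2 : ℂ) * (Y 2 : ℂ) * X 1 + (6) * (Y 1 : ℂ) * (Y 1 : ℂ) * (Y 1 : ℂ) * (Y 2 : ℂ) * (Y 2 : ℂ) * X 2 + (6) * (Y 1 : ℂ) * (Y 1 : ℂ) * (Y 1 : ℂ) * (Y 1 : ℂ) * (Y 2 : ℂ) * X 1 + (-4) * (Y 0 : ℂ) * (Y 1 : ℂ) * (Y 2 : ℂ) * X 0 + (6) * (Y 0 : ℂ) * (Y 1 : ℂ) * (Y 2 : ℂ) * (Y 2 : ℂ) * (Y 2 : ℂ) * X 0 + (6) * (Y 0 : ℂ) * (Y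 1 : ℂ) * (Y 1 : ℂ) * (Y 1 : ℂ) * (Y 2 : ℂ) * X 0 + (6) * (Y 0 : ℂ) * (Y 0 : ℂ) * (Y 1 : ℂ) * (Y 2 : ℂ) * (Y 2 : ℂ) * X 2 + (6) * (Y 0 : ℂ) * (Y 0 : ℂ) * (Y 1 : ℂ) * (Y 1 : ℂ) * (Y 2 : ℂ) * X 1 + (6) * (Y 0 : ℂ) * (Y 0 : ℂ) * (Y 0 : ℂ) * (Y 1 : ℂ) * (Y 2 : ℂ) * X 0)) * hY
  · simp [kd]
    linear_combination (((3/4) * (Y 2 : ℂ) * X 0 + (3/4) * (Y 0 : ℂ) * X 2 + (-4) * (Y 0 : ℂ) * (Y 2 : ℂ) * (Y 2 : ℂ) * X 2 + (6) * (Y 0 : ℂ) * (Y 2 : ℂ) * (Y 2 : ℂ) * (Y 2 : ℂ) * (Y 2 : ℂ) * X 2 + (-4) * (Y 0 : ℂ) * (Y 1 : ℂ) * (Y 2 : ℂ) * X 1 + (6) * (Y 0 : ℂ) * (Y 1 : ℂ) * (Y 2 : ℂ) * (Y 2 : ℂ) * (Y 2 : ℂ) * X 1 + (6) * (Y 0 :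 ℂ) * (Y 1 : ℂ) * (Y 1 : ℂ) * (Y 2 : ℂ) * (Y 2 : ℂ) * X 2 + (6) * (Y 0 : ℂ) * (Y 1 : ℂ) * (Y 1 : ℂ) * (Y 1 : ℂ) * (Y 2 : ℂ) * X 1 + (-4) * (Y 0 : ℂ) * (Y 0 : ℂ) * (Y 2 : ℂ) * X 0 + (6) * (Y 0 : ℂ) * (Y 0 : ℂ) * (Y 2 : ℂ) * (Y 2 : ℂ) * (Y 2 : ℂ) * X 0 + (6) * (Y 0 : ℂ) * (Y 0 : ℂ) * (Y 1 : ℂ) * (Y 1 : ℂ) * (Y 2 : ℂ) * X 0 + (6) * (Y 0 : ℂ) * (Y 0 : ℂ) * (Y 0 : ℂ) * (Y 2 : ℂ) * (Y 2 : ℂ) * X 2 + (6) * (Y 0 : ℂ) * (Y 0 : ℂ) * (Y 0 : ℂ) * (Y 1 : ℂ) * (Y 2 : ℂ) * X 1 + (6) * (Y 0 : ℂ) * (Y 0 : ℂ) * (Y 0 : ℂ) * (Y 0 : ℂ) * (Y 2 : ℂ) * X 0)) * hY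
  · simp [kd]
    linear_combination (((3/4) * (Y 2 : ℂ) * X 1 + (3/4) * (Y 1 : ℂ) * X 2 + (-4) * (Y 1 : ℂ) * (Y 2 : ℂ) * (Y 2 : ℂ) * X 2 + (6) * (Y 1 : ℂ) * (Y 2 : ℂ) * (Y 2 : ℂ) * (Y 2 : ℂ) * (Y 2 : ℂ) * X 2 + (-4) * (Y 1 : ℂ) * (Y 1 : ℂ) * (Y 2 : ℂ) * X 1 + (6) * (Y 1 : ℂ) * (Y 1 : ℂ) * (Y 2 : ℂ) * (Y 2 : ℂ) * (Y 2 : ℂ) * X 1 + (6) * (Y 1 : ℂ) * (Y 1 : ℂ) * (Y 1 : ℂ) * (Y 2 : ℂ) * (Y 2 : ℂ) * X 2 + (6) * (Y 1 : ℂ) * (Y 1 : ℂ) * (Y 1 : ℂ) * (Y 1 : ℂ) * (Y 2 : ℂ) * X 1 + (-4) * (Y 0 : ℂ) * (Y 1 : ℂ) * (Y 2 : ℂ) * X 0 + (6) * (Y 0 : ℂ) * (Y 1 : ℂ) * (Y 2 : ℂ) * (Y 2 : ℂ) * (Y 2 : ℂ) * X 0 + (6) * (Y 0 : ℂ) * (Y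 1 : ℂ) * (Y 1 : ℂ) * (Y 1 : ℂ) * (Y 2 : ℂ) * X 0 + (6) * (Y 0 : ℂ) * (Y 0 : ℂ) * (Y 1 : ℂ) * (Y 2 : ℂ) * (Y 2 : ℂ) * X 2 + (6) * (Y 0 : ℂ) * (Y 0 : ℂ) * (Y 1 : ℂ) * (Y 1 : ℂ) * (Y 2 : ℂ) * X 1 + (6) * (Y 0 : ℂ) * (Y 0 : ℂ) * (Y 0 : ℂ) * (Y 1 : ℂ) * (Y 2 : ℂ) * X 0)) * hY
  · simp [kd]
    linear_combination (((11/6) * (Y 2 : ℂ) * X 2 + (-5) * (Y 2 : ℂ) * (Y 2 : ℂ) * (Y 2 : ℂ) * X 2 + (6) * (Y 2 : ℂ) * (Y 2 : ℂ) * (Y 2 : ℂ) * (Y 2 : ℂ) * (Y 2 : ℂ) * X 2 + (1/3) * (Y 1 : ℂ) * X 1 + (-5) * (Y 1 : ℂ) * (Y 2 : ℂ) * (Y 2 : ℂ) * X 1 + (6) * (Y 1 : ℂ) * (Y 2 : ℂ) * (Y 2 : ℂ) * (Y 2 : ℂ) * (Y 2 : ℂ) * X 1 + (-1) * (Y 1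 : ℂ) * (Y 1 : ℂ) * (Y 2 : ℂ) * X 2 + (6) * (Y 1 : ℂ) * (Y 1 : ℂ) * (Y 2 : ℂ) * (Y 2 : ℂ) * (Y 2 : ℂ) * X 2 + (-1) * (Y 1 : ℂ) * (Y 1 : ℂ) * (Y 1 : ℂ) * X 1 + (6) * (Y 1 : ℂ) * (Y 1 : ℂ) * (Y 1 : ℂ) * (Y 2 : ℂ) * (Y 2 : ℂ) * X 1 + (1/3) * (Y 0 : ℂ) * X 0 + (-5) * (Y 0 : ℂ) * (Y 2 : ℂ) * (Y 2 : ℂ) * X 0 + (6) * (Y 0 : ℂ) * (Y 2 : ℂ) * (Y 2 : ℂ) * (Y 2 : ℂ) * (Y 2 : ℂ) * X 0 + (-1) * (Y 0 : ℂ) * (Y 1 : ℂ) * (Y 1 : ℂ) * X 0 + (6) * (Y 0 : ℂ) * (Y 1 : ℂ) * (Y 1 : ℂ) * (Y 2 : ℂ) * (Y 2 : ℂ) * X 0 + (-1) * (Y 0 : ℂ) * (Y 0 : ℂ) * (Y 2 : ℂ) * X 2 + (6) * (Y 0 : ℂ) * (Y 0 : ℂ) * (Y 2 : ℂ) * (Y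 2 : ℂ) * (Y 2 : ℂ) * X 2 + (-1) * (Y 0 : ℂ) * (Y 0 : ℂ) * (Y 1 : ℂ) * X 1 + (6) * (Y 0 : ℂ) * (Y 0 : ℂ) * (Y 1 : ℂ) * (Y 2 : ℂ) * (Y 2 : ℂ) * X 1 + (-1) * (Y 0 : ℂ) * (Y 0 : ℂ) * (Y 0 : ℂ) * X 0 + (6) * (Y 0 : ℂ) * (Y 0 : ℂ) * (Y 0 : ℂ) * (Y 2 : ℂ) * (Y 2 : ℂ) * X 0)) * hY

lemma LmapKer (hY : (Y 0 : ℂ) * (Y 0 : ℂ) + (Y 1 : ℂ) * (Y 1 : ℂ) + (Y 2 : ℂ) * (Y 2 : ℂ) = 1)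
    (X : Fin 3 → ℂ) (hX : Lmap Y X = 0) :
    X ∈ Submodule.span ℂ {fun i => (Y i : ℂ)} := by
  rw [Submodule.mem_span_singleton]
  refine ⟨∑ m, X m * (Y m : ℂ), ?_⟩
  have h : ∀ a b : Fin 3, (Y a : ℂ) * (X b - (∑ m, X m * (Y m : ℂ)) * (Y b : ℂ))
      + (Y b : ℂ) * (X a - (∑ m, X m * (Y m : ℂ)) * (Y a : ℂ)) = 0 := by
    intro a b
    have h2 := congrFun (congrFun hX a) b
    simpa [Lmap, Lfun] using h2
  funext j
  have h0 := h 0 j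
  have h1 := h 1 j
  have h2 := h 2 j
  simp only [Fin.sum_univ_three] at h0 h1 h2 ⊢
  simp only [Pi.smul_apply, smul_eq_mul]
  linear_combination (-(Y 0 : ℂ)) * h0 + (-(Y 1 : ℂ)) * h1 + (-(Y 2 : ℂ)) * h2
    + (X j - 2 * (X 0 * (Y 0 : ℂ) + X 1 * (Y 1 : ℂ) + X 2 * (Y 2 : ℂ)) * (Y j : ℂ)) * hY

lemma spanT (hY : (Y 0 : ℂ) * (Y 0 : ℂ) + (Y 1 : ℂ) * (Y 1 : ℂ) + (Y 2 : ℂ) * (Y 2 : ℂ) = 1)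
    (hT : ∀ (E : Tens2) (i j : Fin 3), T E i j = ∑ k, ∑ l, Tcoef Y k l i j * E k l)
    (E : Tens2) :
    T E = mT Y E 0 • NT Y 0 + mT Y E 1 • NT Y 1 + mT Y E 2 • NT Y 2 := by
  funext i j
  simp only [Pi.add_apply, Pi.smul_apply, smul_eq_mul, hT, NT, mT, cv, cw, cq, ct, Tcoef,
    Fin.sum_univ_three]
  fin_cases i <;> fin_cases j
  · simp [kd]
    linear_combination (((1/6) * E 2 2 + (1/6) * E 1 1 + (1/6) * E 0 0 + (-1) * (Y 2 : ℂ) * (Y 2 : ℂ) * E 2 2 + (-1) * (Y 1 : ℂ) * (Y 2 : ℂ) * E 2 1 + (-1) * (Y 1 : ℂ) * (Y 2 : ℂ) * E 1 2 + (-1) * (Y 1 : ℂ) * (Y 1 : ℂ) * E 1 1 + (-1) * (Y 0 : ℂ) * (Y 2 : ℂ) * E 2 0 + (-1) * (Y 0 : ℂ) * (Y 2 : ℂ) * E 0 2 + (-1) * (Y 0 : ℂ) * (Y 1 : ℂ) * E 1 0 + (-1) * (Y 0 : ℂ) * (Y 1 : ℂ) * E 0 1 + (-1) * (Y 0 : ℂ)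 * (Y 0 : ℂ) * E 0 0)) * hY
  · simp [kd]
    linear_combination ((0:ℂ)) * hY
  · simp [kd]
    linear_combination ((0:ℂ)) * hY
  · simp [kd]
    linear_combination ((0:ℂ)) * hY
  · simp [kd]
    linear_combination (((1/6) * E 2 2 + (1/6) * E 1 1 + (1/6) * E 0 0 + (-1) * (Y 2 : ℂ) * (Y 2 : ℂ) * E 2 2 + (-1) * (Y 1 : ℂ) * (Y 2 : ℂ) * E 2 1 + (-1) * (Y 1 : ℂ) * (Y 2 : ℂ) * E 1 2 + (-1) * (Y 1 : ℂ) * (Y 1 : ℂ) * E 1 1 + (-1) * (Y 0 : ℂ) * (Y 2 : ℂ) * E 2 0 + (-1) * (Y 0 : ℂ) * (Y 2 : ℂ) * E 0 2 + (-1) * (Y 0 : ℂ) * (Y 1 : ℂ) * E 1 0 + (-1) * (Y 0 : ℂ) * (Y 1 : ℂ) * E 0 1 + (-1) * (Y 0 : ℂ) * (Y 0 : ℂ) * E 0 0)) * hY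
  · simp [kd]
    linear_combination ((0:ℂ)) * hY
  · simp [kd]
    linear_combination ((0:ℂ)) * hY
  · simp [kd]
    linear_combination ((0:ℂ)) * hY
  · simp [kd]
    linear_combination (((1/6) * E 2 2 + (1/6) * E 1 1 + (1/6) * E 0 0 + (-1) * (Y 2 : ℂ) * (Y 2 : ℂ) * E 2 2 + (-1) * (Y 1 : ℂ) * (Y 2 : ℂ) * E 2 1 + (-1) * (Y 1 : ℂ) * (Y 2 : ℂ) * E 1 2 + (-1) * (Y 1 : ℂ) * (Y 1 : ℂ) * E 1 1 + (-1) * (Y 0 : ℂ) * (Y 2 : ℂ) * E 2 0 + (-1) * (Y 0 : ℂ) * (Y 2 : ℂ) * E 0 2 + (-1) * (Y 0 : ℂ) * (Y 1 : ℂ) * E 1 0 + (-1) * (Y 0 : ℂ) * (Y 1 : ℂ) * E 0 1 + (-1) * (Y 0 : ℂ) * (Y 0 : ℂ) * E 0 0)) * hY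

end Aux

/-- For a unit vector `Y` in a 3-dimensional real inner product space, the endomorphism
`T(E)_{ij} = T^{kl}{}_{ij} E_{kl}` of the complex space of (0,2)-tensors is self-adjoint
w.r.t. the Hermitian inner product `⟨E, Ẽ⟩ = conj(E)^{ij} Ẽ_{ij}`, its eigenvalues are
exactly `−1, 0, 3/4`, with eigenspace dimensions `1, 6, 2` respectively. -/
theorem stmt_5 (Y : Fin 3 → ℝ) (hunit : ∑ i, Y i * Y i = 1)
    (T : Module.End ℂ Tens2)
    (hT : ∀ (E : Tens2) (i j : Fin 3), T E i j = ∑ k, ∑ l, Tcoef Y k l i j * E k l) :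
    (∀ E F : Tens2,
        (∑ i, ∑ j, (starRingEnd ℂ) (T E i j) * F i j)
          = ∑ i, ∑ j, (starRingEnd ℂ) (E i j) * T F i j)
    ∧ (∀ c : ℂ, Module.End.HasEigenvalue T c ↔ (c = -1 ∨ c = 0 ∨ c = 3/4))
    ∧ Module.finrank ℂ (Module.End.eigenspace T (-1)) = 1
    ∧ Module.finrank ℂ (Module.End.eigenspace T 0) = 6
    ∧ Module.finrank ℂ (Module.End.eigenspace T (3/4)) = 2 := by
  have hY : (Y 0 : ℂ) * (Y 0 : ℂ) + (Y 1 : ℂ) * (Y 1 : ℂ) + (Y 2 : ℂ) * (Y 2 : ℂ) = 1 := by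
    have h := hunit
    rw [Fin.sum_univ_three] at h
    have h2 := congrArg Complex.ofReal h
    push_cast at h2
    exact h2
  -- dimension of the ambient space
  have h9 : Module.finrank ℂ Tens2 = 9 := by
    have h1 : Module.finrank ℂ Tens2 = ∑ _i : Fin 3, Module.finrank ℂ (Fin 3 → ℂ) :=
      Module.finrank_pi_fintype ℂ
    simp [h1, Module.finrank_pi]
  have h3 : Module.finrank ℂ (Fin 3 → ℂ) = 3 := by simp [Module.finrank_pi]
  -- eigenvalue -1 : lower bound 1
  have hd1 : 1 ≤ Module.finrank ℂ (Module.End.eigenspace T (-1)) := by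
    have hpos : 0 < Module.finrank ℂ (Module.End.eigenspace T (-1)) := by
      rw [Module.finrank_pos_iff_exists_ne_zero]
      refine ⟨⟨PnegT Y, PnegMem hY hT⟩, ?_⟩
      intro hc
      exact PnegNe (by simpa using congrArg Subtype.val hc)
    omega
  -- eigenvalue 3/4 : lower bound 2
  have hLrange : LinearMap.range (Lmap Y) ≤ Module.End.eigenspace T (3/4) := by
    rintro x ⟨X, rfl⟩
    exact LmapEig hY hT X
  have hYcne : (fun i => (Y i : ℂ)) ≠ 0 := by
    intro h0
    have e0 := congrFun h0 0
    have e1 := congrFun h0 1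
    have e2 := congrFun h0 2
    simp only [Pi.zero_apply] at e0 e1 e2
    rw [e0, e1, e2] at hY
    norm_num at hY
  have hkerL : Module.finrank ℂ (LinearMap.ker (Lmap Y)) ≤ 1 := by
    have hle : LinearMap.ker (Lmap Y) ≤ Submodule.span ℂ {fun i => (Y i : ℂ)} := by
      intro X hX
      exact LmapKer hY X (LinearMap.mem_ker.mp hX)
    calc Module.finrank ℂ (LinearMap.ker (Lmap Y))
        ≤ Module.finrank ℂ (Submodule.span ℂ {fun i => (Y i : ℂ)}) := Submodule.finrank_mono hle
      _ = 1 := finrank_span_singleton hYcne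
  have hLrn := LinearMap.finrank_range_add_finrank_ker (Lmap Y)
  rw [h3] at hLrn
  have hd34 : 2 ≤ Module.finrank ℂ (Module.End.eigenspace T (3/4)) := by
    have h2r : 2 ≤ Module.finrank ℂ (LinearMap.range (Lmap Y)) := by omega
    exact le_trans h2r (Submodule.finrank_mono hLrange)
  -- rank of T at most 3
  have hsupsing : ∀ x : Tens2, Module.finrank ℂ (Submodule.span ℂ {x}) ≤ 1 := by
    intro x
    by_cases hx : x = 0
    · rw [hx, Submodule.span_zero_singleton]
      simp
    · rw [finrank_span_singleton hx]
  have hsuple2 : ∀ p q : Submodule ℂ Tens2,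
      Module.finrank ℂ (p ⊔ q : Submodule ℂ Tens2) ≤ Module.finrank ℂ p + Module.finrank ℂ q := by
    intro p q
    have h := Submodule.finrank_sup_add_finrank_inf_eq p q
    omega
  have hTrangele : LinearMap.range T ≤
      Submodule.span ℂ ({NT Y 0, NT Y 1, NT Y 2} : Set Tens2) := by
    rintro x ⟨E, rfl⟩
    rw [spanT hY hT E]
    refine Submodule.add_mem _ (Submodule.add_mem _ ?_ ?_) ?_
    · exact Submodule.smul_mem _ _ (Submodule.subset_span (by simp))
    · exact Submodule.smul_mem _ _ (Submodule.subset_span (by simp))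
    · exact Submodule.smul_mem _ _ (Submodule.subset_span (by simp))
  have hrank3 : Module.finrank ℂ (LinearMap.range T) ≤ 3 := by
    refine le_trans (Submodule.finrank_mono hTrangele) ?_
    have e : ({NT Y 0, NT Y 1, NT Y 2} : Set Tens2)
        = {NT Y 0} ∪ ({NT Y 1} ∪ ({NT Y 2} : Set Tens2)) := by
      rw [Set.insert_eq, Set.insert_eq]
    rw [e, Submodule.span_union, Submodule.span_union]
    refine le_trans (hsuple2 _ _) ?_
    refine le_trans (Nat.add_le_add (hsupsing (NT Y 0)) (hsuple2 _ _)) ?_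
    refine le_trans (Nat.add_le_add le_rfl
      (Nat.add_le_add (hsupsing (NT Y 1)) (hsupsing (NT Y 2)))) ?_
    norm_num
  -- eigenspaces -1 and 3/4 sit inside the range and are disjoint
  have hdisj : Disjoint (Module.End.eigenspace T (-1)) (Module.End.eigenspace T (3/4)) := by
    rw [Submodule.disjoint_def]
    intro x hx1 hx2
    rw [Module.End.mem_eigenspace_iff] at hx1 hx2
    have h := hx1.symm.trans hx2
    have h2 : ((-1 : ℂ) - 3/4) • x = 0 := by
      rw [sub_smul, h, sub_self]
    rcases smul_eq_zero.mp h2 with hc | hx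
    · norm_num at hc
    · exact hx
  have hsuple : Module.End.eigenspace T (-1) ⊔ Module.End.eigenspace T (3/4)
      ≤ LinearMap.range T := by
    refine sup_le ?_ ?_
    · intro x hx
      rw [Module.End.mem_eigenspace_iff] at hx
      exact ⟨-x, by rw [map_neg, hx]; simp⟩
    · intro x hx
      rw [Module.End.mem_eigenspace_iff] at hx
      refine ⟨(4/3 : ℂ) • x, ?_⟩
      rw [map_smul, hx, smul_smul]
      norm_num
  have hsupeq := Submodule.finrank_sup_add_finrank_inf_eq
    (Module.End.eigenspace T (-1)) (Module.End.eigenspace T (3/4))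
  rw [hdisj.eq_bot, finrank_bot] at hsupeq
  have hsuprank := Submodule.finrank_mono hsuple
  have hTrn := LinearMap.finrank_range_add_finrank_ker T
  rw [h9] at hTrn
  have hker0 : Module.End.eigenspace T 0 = LinearMap.ker T := Module.End.eigenspace_zero T
  -- final dimension count
  have hdim1 : Module.finrank ℂ (Module.End.eigenspace T (-1)) = 1 := by omega
  have hdim34 : Module.finrank ℂ (Module.End.eigenspace T (3/4)) = 2 := by omega
  have hdim0 : Module.finrank ℂ (Module.End.eigenspace T 0) = 6 := by
    rw [hker0]
    omega
  refine ⟨?_, ?_, hdim1, hdim0, hdim34⟩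
  · -- self-adjointness
    intro E F
    simp only [hT]
    simp only [Fin.sum_univ_three, Tcoef]
    simp [kd]
    simp only [map_add, map_sub, map_mul, map_neg, map_div₀, map_ofNat, map_one, map_zero,
      Complex.conj_ofReal]
    ring
  · -- eigenvalues
    intro c
    constructor
    · intro hc
      obtain ⟨v, hv⟩ := hc.exists_hasEigenvector
      have h1 : T v = c • v := hv.apply_eq_smul
      have h2 : T (T v) = (c * c) • v := by
        rw [h1, map_smul, h1, smul_smul]
      have h3 : T (T (T v)) = (c * c * c) • v := by
        rw [h2, map_smul, h1, smul_smul]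
      have hvne : ∃ i j, v i j ≠ 0 := by
        by_contra hall
        push_neg at hall
        exact hv.2 (funext fun i => funext fun j => hall i j)
      obtain ⟨i, j, hij⟩ := hvne
      have hc3 := cubic hY hT v i j
      rw [h3, h2, h1] at hc3
      simp only [Pi.smul_apply, smul_eq_mul] at hc3
      have hfac : (c * c * c + (1/4) * (c * c) - (3/4) * c) * v i j = 0 := by
        linear_combination hc3
      have hcc : c * c * c + (1/4) * (c * c) - (3/4) * c = 0 := by
        rcases mul_eq_zero.mp hfac with h | h
        · exact h
        · exact absurd h hij
      have hfac2 : c * ((c + 1) * (c - 3/4)) = 0 := by linear_combination hcc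
      rcases mul_eq_zero.mp hfac2 with h | h
      · exact Or.inr (Or.inl h)
      · rcases mul_eq_zero.mp h with h' | h'
        · exact Or.inl (by linear_combination h')
        · exact Or.inr (Or.inr (by linear_combination h'))
    · intro hc
      rw [Module.End.hasEigenvalue_iff]
      rcases hc with rfl | rfl | rfl
      · intro hbot
        rw [hbot, finrank_bot] at hdim1
        norm_num at hdim1
      · intro hbot
        rw [hbot, finrank_bot] at hdim0
        norm_num at hdim0
      · intro hbot
        rw [hbot, finrank_bot] at hdim34
        norm_num at hdim34
end
end

section
/- With T as above restricted to the 5-dimensional complex space of symmetric h-trace-free (0,2)-tensors, the eigenvalue-0 eigenspace is exactly the 2-dimensional space of symmetric trace-free tensors e_{kl} with e_{kl} Y^l = 0, and the eigenvalue-3/4 eigenspace is the 2-dimensional span of Y_{(k} v_{l)} for vectors v orthogonal to Y. -/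
noncomputable section

/-!
Write `w = EY` and `s = E(Y,Y)`. On symmetric trace-free `E` the `h^{kl}` terms of `T` vanish
and `TE = (3/4)(Y ⊗ w + w ⊗ Y) - 3 s Y ⊗ Y + (s/2) h`. Contracting `TE = c E` with `Y` gives
`c w = (3/4) w - (7/4) s Y`, and contracting once more gives `(c + 1) s = 0`. Hence `s = 0` for
`c ∈ {0, 3/4}`; then `c = 0` forces `w = 0`, while `c = 3/4` forces `E = Y ⊗ w + w ⊗ Y`.
-/

open Matrix

variable {ι : Type*} [Fintype ι] [DecidableEq ι]

/-- What `T` reduces to on symmetric trace-free `E`, with `y = Y` and `1 = h`. -/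
def reducedT (y : ι → ℂ) (E : Matrix ι ι ℂ) : Matrix ι ι ℂ :=
  (3 / 4 : ℂ) • (vecMulVec y (E *ᵥ y) + vecMulVec (E *ᵥ y) y)
    - (3 * (y ⬝ᵥ E *ᵥ y)) • vecMulVec y y + ((y ⬝ᵥ E *ᵥ y) / 2) • 1

section
variable {y : ι → ℂ} {E : Matrix ι ι ℂ}

lemma reducedT_mulVec (hy : y ⬝ᵥ y = 1) :
    reducedT y E *ᵥ y = (3 / 4 : ℂ) • (E *ᵥ y) - (7 / 4 * (y ⬝ᵥ E *ᵥ y)) • y := by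
  have hwy : E *ᵥ y ⬝ᵥ y = y ⬝ᵥ E *ᵥ y := dotProduct_comm _ _
  simp only [reducedT, sub_mulVec, add_mulVec, smul_mulVec, vecMulVec_mulVec, one_mulVec,
    op_smul_eq_smul, hy, hwy, one_smul, smul_add, smul_smul]
  module

lemma quadratic_eq_zero_of_reducedT_eq_smul (hy : y ⬝ᵥ y = 1) {c : ℂ} (hc : c ≠ -1)
    (h : reducedT y E = c • E) : y ⬝ᵥ E *ᵥ y = 0 := by
  have hw : (3 / 4 : ℂ) • (E *ᵥ y) - (7 / 4 * (y ⬝ᵥ E *ᵥ y)) • y = c • (E *ᵥ y) := by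
    rw [← reducedT_mulVec hy, h, smul_mulVec]
  have hs := congrArg (y ⬝ᵥ ·) hw
  simp only [dotProduct_sub, dotProduct_smul, hy, smul_eq_mul] at hs
  have : (c + 1) * (y ⬝ᵥ E *ᵥ y) = 0 := by linear_combination -hs
  exact (mul_eq_zero.1 this).resolve_left (by contrapose! hc; linear_combination hc)

lemma reducedT_eq_zero_iff (hy : y ⬝ᵥ y = 1) : reducedT y E = 0 ↔ E *ᵥ y = 0 := by
  constructor
  · intro h
    have hs := quadratic_eq_zero_of_reducedT_eq_smul hy (c := 0) (by norm_num)
      (by rw [h, zero_smul])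
    have hw := reducedT_mulVec (E := E) hy
    rw [h, hs, zero_mulVec, mul_zero, zero_smul, sub_zero, eq_comm, smul_eq_zero] at hw
    exact hw.resolve_left (by norm_num)
  · intro h
    simp [reducedT, h]

lemma reducedT_eq_smul_iff (hy : y ⬝ᵥ y = 1) :
    reducedT y E = (3 / 4 : ℂ) • E ↔
      ∃ v : ι → ℂ, v ⬝ᵥ y = 0 ∧ ∀ i j, E i j = (y i * v j + y j * v i) / 2 := by
  constructor
  · intro h
    have hs := quadratic_eq_zero_of_reducedT_eq_smul hy (by norm_num) h
    refine ⟨(2 : ℂ) • (E *ᵥ y), by rw [smul_dotProduct, dotProduct_comm, hs, smul_zero],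
      fun i j => ?_⟩
    have hij := congrFun (congrFun h i) j
    simp only [reducedT, hs, mul_zero, zero_smul, sub_zero, zero_div, add_zero, smul_add,
      Matrix.add_apply, Matrix.smul_apply, Matrix.zero_apply, vecMulVec_apply, smul_eq_mul] at hij
    simp only [Pi.smul_apply, smul_eq_mul]
    linear_combination (-4 / 3 : ℂ) * hij
  · rintro ⟨v, hv, hE⟩
    have hE' : E = (1 / 2 : ℂ) • (vecMulVec y v + vecMulVec v y) := by
      ext i j
      simp only [hE, Matrix.smul_apply, Matrix.add_apply, vecMulVec_apply, smul_eq_mul]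
      ring
    have hw : E *ᵥ y = (1 / 2 : ℂ) • v := by
      rw [hE', smul_mulVec, add_mulVec, vecMulVec_mulVec, vecMulVec_mulVec, op_smul_eq_smul,
        op_smul_eq_smul, hv, hy, zero_smul, zero_add, one_smul]
    have hs : y ⬝ᵥ E *ᵥ y = 0 := by rw [hw, dotProduct_smul, dotProduct_comm, hv, smul_zero]
    rw [reducedT, hs, hw, hE', vecMulVec_smul, smul_vecMulVec]
    simp only [zero_div, zero_smul, mul_zero, sub_zero, add_zero, smul_add, smul_smul]

end

lemma sum_Tcoef_mul_eq_reducedT (Y : Fin 3 → ℝ) (E : Tens2) (hsym : ∀ i j, E i j = E j i)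
    (htr : ∑ i, E i i = 0) (i j : Fin 3) :
    ∑ k, ∑ l, Tcoef Y k l i j * E k l = reducedT (Complex.ofReal ∘ Y) E i j := by
  have h22 : E 2 2 = -E 0 0 - E 1 1 := by
    rw [Fin.sum_univ_three] at htr; linear_combination htr
  fin_cases i <;> fin_cases j <;>
    simp [Tcoef, kd, reducedT, Fin.sum_univ_three, mulVec, dotProduct, vecMulVec_apply,
      one_apply, hsym 1 0, hsym 2 0, hsym 2 1, h22] <;> ring

/-- On the 5-dimensional space of symmetric `h`-trace-free (0,2)-tensors, the
eigenvalue-`0` eigenspace of `T` is exactly the space of symmetric trace-free tensors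
`e` with `e_{kl} Y^l = 0`, and the eigenvalue-`3/4` eigenspace is exactly the span of
the tensors `Y_{(k} v_{l)}` for vectors `v` orthogonal to `Y`. -/
theorem stmt_7 (Y : Fin 3 → ℝ) (hunit : ∑ i, Y i * Y i = 1) :
    ∀ E : Tens2, (∀ i j, E i j = E j i) → (∑ i, E i i = 0) →
      (((∀ i j, (∑ k, ∑ l, Tcoef Y k l i j * E k l) = 0)
          ↔ (∀ k, ∑ l, E k l * (Y l : ℂ) = 0))
      ∧ ((∀ i j, (∑ k, ∑ l, Tcoef Y k l i j * E k l) = (3/4) * E i j)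
          ↔ (∃ v : Fin 3 → ℂ, (∑ i, v i * (Y i : ℂ)) = 0
              ∧ ∀ k l, E k l = ((Y k : ℂ) * v l + (Y l : ℂ) * v k) / 2))) := by
  intro E hsym htr
  have hy : (Complex.ofReal ∘ Y) ⬝ᵥ (Complex.ofReal ∘ Y) = 1 := by
    simp only [dotProduct, Function.comp_apply]
    exact_mod_cast hunit
  simp only [sum_Tcoef_mul_eq_reducedT Y E hsym htr]
  exact ⟨Matrix.ext_iff.trans ((reducedT_eq_zero_iff hy).trans funext_iff),
    Matrix.ext_iff.trans (reducedT_eq_smul_iff hy)⟩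
end
end

section
/- Let (Σ, h, ε) be an oriented 3-dimensional Riemannian manifold and Y a unit Killing field with vanishing divergence and curl ε_i{}^{kl} D_k Y_l = λ Y_i. Then for E_{ij(1)} := (1/√6)(3Y_i Y_j − h_{ij}), the symmetrized curl satisfies ε_{(i}{}^{kl} D_{|k|} E_{j)l(1)} = (3λ/2) E_{ij(1)}. -/
noncomputable section

/-- Sign of the ordered pair `(x, y)`. -/
def sgnF {n : ℕ} (x y : Fin n) : ℤ := if x < y then 1 else if y < x then -1 else 0

/-- Levi-Civita symbol: the volume form of an oriented Riemannian 3-manifold in an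
oriented orthonormal frame. -/
def eps3R (a b c : Fin 3) : ℝ := ((sgnF a b * sgnF a c * sgnF b c : ℤ) : ℝ)

/-- Kronecker delta (the metric `h` in an orthonormal frame). -/
def kdR (a b : Fin 3) : ℝ := if a = b then 1 else 0

/-- Components in an orthonormal frame on an oriented Riemannian 3-manifold:
`Y i = Y_i`, `A k j = D_k Y_j`, `E1 = E_{ij(1)} = (1/√6)(3 Y_i Y_j − h_{ij})`, and
`DE k j l = D_k E_{jl(1)}` (computed by the Leibniz rule, `D h = 0`).  If `Y` is a unit
Killing field with vanishing divergence and curl `ε_i{}^{kl} D_k Y_l = λ Y_i`, then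
the symmetrized curl satisfies `ε_{(i}{}^{kl} D_{|k|} E_{j)l(1)} = (3λ/2) E_{ij(1)}`. -/
theorem stmt_9 (Y : Fin 3 → ℝ) (A : Fin 3 → Fin 3 → ℝ) (lam : ℝ)
    (E1 : Fin 3 → Fin 3 → ℝ) (DE : Fin 3 → Fin 3 → Fin 3 → ℝ)
    (hunit : ∑ i, Y i * Y i = 1)
    (hKilling : ∀ i j, A i j + A j i = 0)
    (hdiv : ∑ k, A k k = 0)
    (hcurl : ∀ i, (∑ k, ∑ l, eps3R i k l * A k l) = lam * Y i)
    (hE1 : ∀ i j, E1 i j = (Real.sqrt 6)⁻¹ * (3 * Y i * Y j - kdR i j))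
    (hDE : ∀ k j l, DE k j l = (Real.sqrt 6)⁻¹ * 3 * (A k j * Y l + A k l * Y j)) :
    ∀ i j, (1/2) * ((∑ k, ∑ l, eps3R i k l * DE k j l)
                   + (∑ k, ∑ l, eps3R j k l * DE k i l))
      = (3 * lam / 2) * E1 i j := by

  have hY := hunit
  simp only [Fin.sum_univ_three] at hY
  have hA00 : A 0 0 = 0 := by linarith [hKilling 0 0]
  have hA11 : A 1 1 = 0 := by linarith [hKilling 1 1]
  have hA22 : A 2 2 = 0 := by linarith [hKilling 2 2]
  have hA10 : A 1 0 = -A 0 1 := by linarith [hKilling 0 1]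
  have hA20 : A 2 0 = -A 0 2 := by linarith [hKilling 0 2]
  have hA21 : A 2 1 = -A 1 2 := by linarith [hKilling 1 2]
  have hc0 := hcurl 0
  have hc1 := hcurl 1
  have hc2 := hcurl 2
  simp only [Fin.sum_univ_three] at hc0 hc1 hc2
  norm_num [eps3R, sgnF, Fin.lt_def, hA10, hA20, hA21] at hc0 hc1 hc2
  have e12 : A 1 2 = lam * Y 0 / 2 := by linarith
  have e02 : A 0 2 = -(lam * Y 1) / 2 := by linarith
  have e01 : A 0 1 = lam * Y 2 / 2 := by linarith
  have m0 : (⟨0, by norm_num⟩ : Fin 3) = 0 := rfl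
  have m1 : (⟨1, by norm_num⟩ : Fin 3) = 1 := rfl
  have m2 : (⟨2, by norm_num⟩ : Fin 3) = 2 := rfl
  intro i j
  fin_cases i <;> fin_cases j <;>
    simp only [Fin.sum_univ_three, hDE, hE1, m0, m1, m2] <;>
    norm_num [eps3R, sgnF, kdR, Fin.lt_def, Fin.ext_iff, hA00, hA11, hA22, hA10, hA20, hA21,
      e12, e02, e01, m0, m1, m2]
  all_goals first | ring1 | linear_combination (-(3/2) * lam * (Real.sqrt 6)⁻¹) * hY
end
end

section
/- Under the same hypotheses (Y a unit, divergence-free Killing field on an oriented Riemannian 3-manifold with curl λY), the divergence of E_{ij(1)} = (1/√6)(3 Y_i Y_j − h_{ij}) vanishes: D^k E_{ik(1)} = 0. -/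
/-!
Since `D_k Y_l` is antisymmetric, in dimension three it is the Hodge dual of half the curl,
`D_k Y_l = ½ ε_{klm} λ Y^m`. Hence `Y^k D_k Y_i = ½ λ (Y × Y)_i = 0` and `D^k Y_k = 0`, and the
Leibniz rule `D_k E_{ik(1)} = (3/√6)(Y^k D_k Y_i + Y_i D^k Y_k)` shows that the divergence vanishes.
-/

noncomputable section

open Matrix

theorem sum_diag_eq_zero_of_antisymm {ι : Type*} [Fintype ι] {A : ι → ι → ℝ}
    (hA : ∀ i j, A i j + A j i = 0) : ∑ k, A k k = 0 :=
  Finset.sum_eq_zero fun k _ => by linarith [hA k k]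

/-- The curl `ε_i{}^{kl} A_{kl}` of a two-tensor in an oriented orthonormal frame. -/
def curl (A : Fin 3 → Fin 3 → ℝ) : Fin 3 → ℝ := fun i => ∑ k, ∑ l, eps3R i k l * A k l

/-- An antisymmetric `A` equals `½ ε (curl A)`, so contracting it with `Y` is a cross product. -/
theorem sum_mul_eq_half_curl_cross {A : Fin 3 → Fin 3 → ℝ} (hA : ∀ i j, A i j + A j i = 0)
    (Y : Fin 3 → ℝ) : (fun i => ∑ k, A k i * Y k) = (1 / 2 : ℝ) • (curl A ⨯₃ Y) := by
  have h10 : A 1 0 = -A 0 1 := by linarith [hA 0 1]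
  have h20 : A 2 0 = -A 0 2 := by linarith [hA 0 2]
  have h21 : A 2 1 = -A 1 2 := by linarith [hA 1 2]
  have hdiag : ∀ k, A k k = 0 := fun k => by linarith [hA k k]
  ext i
  fin_cases i <;>
    simp [Fin.sum_univ_three, curl, cross_apply, eps3R, sgnF, h10, h20, h21, hdiag] <;> ring

theorem sum_mul_eq_zero_of_curl_eq_smul {A : Fin 3 → Fin 3 → ℝ}
    (hA : ∀ i j, A i j + A j i = 0) {Y : Fin 3 → ℝ} {lam : ℝ} (hcurl : curl A = lam • Y)
    (i : Fin 3) : ∑ k, A k i * Y k = 0 := by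
  have h := congrFun (sum_mul_eq_half_curl_cross hA Y) i
  rw [hcurl, LinearMap.map_smul₂, cross_self] at h
  simpa using h

/-- Components in an orthonormal frame: `Y i = Y_i`, `A k j = D_k Y_j`, and `DE k j l = D_k E_{jl(1)}`
for `E_{ij(1)} = (1/√6)(3 Y_i Y_j − h_{ij})`, by the Leibniz rule and `D h = 0`. -/
theorem stmt_10_general (Y : Fin 3 → ℝ) (A : Fin 3 → Fin 3 → ℝ) (lam : ℝ)
    (DE : Fin 3 → Fin 3 → Fin 3 → ℝ)
    (hKilling : ∀ i j, A i j + A j i = 0)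
    (hcurl : ∀ i, (∑ k, ∑ l, eps3R i k l * A k l) = lam * Y i)
    (hDE : ∀ k j l, DE k j l = (Real.sqrt 6)⁻¹ * 3 * (A k j * Y l + A k l * Y j)) :
    ∀ i, (∑ k, DE k i k) = 0 := by
  intro i
  have hYA : ∑ k, A k i * Y k = 0 :=
    sum_mul_eq_zero_of_curl_eq_smul hKilling (funext hcurl) i
  have htrace : ∑ k, A k k = 0 := sum_diag_eq_zero_of_antisymm hKilling
  calc ∑ k, DE k i k
      = (Real.sqrt 6)⁻¹ * 3 * (∑ k, A k i * Y k + (∑ k, A k k) * Y i) := by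
        simp only [hDE, ← Finset.mul_sum, Finset.sum_add_distrib, Finset.sum_mul]
    _ = 0 := by rw [hYA, htrace]; ring

/-- Components in an orthonormal frame: `Y i = Y_i`, `A k j = D_k Y_j`,
`E1 = E_{ij(1)} = (1/√6)(3 Y_i Y_j − h_{ij})`, `DE k j l = D_k E_{jl(1)}` (Leibniz rule,
`D h = 0`).  If `Y` is a unit divergence-free Killing field with curl `λ Y`, then the
divergence of `E_{ij(1)}` vanishes: `D^k E_{ik(1)} = 0`. -/
theorem stmt_10 (Y : Fin 3 → ℝ) (A : Fin 3 → Fin 3 → ℝ) (lam : ℝ)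
    (E1 : Fin 3 → Fin 3 → ℝ) (DE : Fin 3 → Fin 3 → Fin 3 → ℝ)
    (hunit : ∑ i, Y i * Y i = 1)
    (hKilling : ∀ i j, A i j + A j i = 0)
    (hdiv : ∑ k, A k k = 0)
    (hcurl : ∀ i, (∑ k, ∑ l, eps3R i k l * A k l) = lam * Y i)
    (hE1 : ∀ i j, E1 i j = (Real.sqrt 6)⁻¹ * (3 * Y i * Y j - kdR i j))
    (hDE : ∀ k j l, DE k j l = (Real.sqrt 6)⁻¹ * 3 * (A k j * Y l + A k l * Y j)) :
    ∀ i, (∑ k, DE k i k) = 0 :=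
  stmt_10_general Y A lam DE hKilling hcurl hDE
end
end

section
/- Let (W, h, ε) be a 3-dimensional oriented real inner product space and ξ ∈ W* a covector. The linear map on the 9-dimensional complex space of (0,2)-tensors given by E_{kl} ↦ i ξ_m ε^{m(l}{}_{(i} δ_{j)}{}^{k)} E_{kl} is diagonalizable with eigenvalues 0, ±|ξ|/2, ±|ξ| where |ξ| = (h^{ij} ξ_i ξ_j)^{1/2}; the eigenvalue 0 has a 5-dimensional eigenspace and each of the eigenvalues ±|ξ|/2, ±|ξ| has a 1-dimensional eigenspace. -/
noncomputable section

/-- Levi-Civita symbol (the orientation form in an oriented orthonormal basis). -/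
def eps3 (a b c : Fin 3) : ℂ := ((sgnF a b * sgnF a c * sgnF b c : ℤ) : ℂ)

/-!
Let `K` be the matrix of `v ↦ ξ × v`. Since `ξ_m ε^{m l}{}_i = K_{il}`, the operator is
`E ↦ (i/4) S(K S(E))` with `S(M) = M + Mᵀ`. It kills the antisymmetric tensors and, as `Kᵀ = -K`,
the identity; and if `K u = a u`, `K v = b v`, then `u ⊗ v + v ⊗ u` is an eigenvector with
eigenvalue `i (a + b) / 2`. Since `det (K - t) = -t (t² + |ξ|²)`, `K` has the eigenvectors `ξ`
(eigenvalue `0`) and `w±` (eigenvalue `∓ i |ξ|`). This gives eigenvectors `w± ⊙ ξ` for `±|ξ|/2`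
and `w± ⊙ w±` for `±|ξ|`, while the three antisymmetric basis tensors, `1` and `ξ ⊙ ξ` are five
independent elements of the kernel. Eigenspaces for distinct eigenvalues are independent, so these
lower bounds `5, 1, 1, 1, 1`, which add up to `9`, are equalities and the eigenspaces span.
-/

open Module

namespace Module.End

variable {K V ι : Type*} [Field K] [AddCommGroup V] [Module K V] {f : End K V} {μ : ι → K}

theorem HasEigenvalue.mem_range_of_iSup_eigenspace_eq_top
    (h : ⨆ i, f.eigenspace (μ i) = ⊤) {c : K} (hc : f.HasEigenvalue c) :
    c ∈ Set.range μ := by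
  by_contra hcμ
  have hdisj := f.eigenspaces_iSupIndep.disjoint_biSup hcμ
  rw [iSup_range, h, disjoint_top] at hdisj
  exact hasEigenvalue_iff.1 hc hdisj

variable [FiniteDimensional K V] [Fintype ι]

theorem sum_finrank_eigenspace_le (hμ : Function.Injective μ) :
    ∑ i, finrank K (f.eigenspace (μ i)) ≤ finrank K V := by
  classical
  have hind : iSupIndep fun i => f.eigenspace (μ i) := f.eigenspaces_iSupIndep.comp hμ
  rw [← finrank_directSum]
  exact LinearMap.finrank_le_finrank_of_injective hind.dfinsupp_lsum_injective

theorem iSup_eigenspace_eq_top_of_sum_finrank_eq (hμ : Function.Injective μ)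
    (h : ∑ i, finrank K (f.eigenspace (μ i)) = finrank K V) :
    ⨆ i, f.eigenspace (μ i) = ⊤ := by
  classical
  have hind : iSupIndep fun i => f.eigenspace (μ i) := f.eigenspaces_iSupIndep.comp hμ
  rw [Submodule.iSup_eq_range_dfinsupp_lsum]
  apply Submodule.eq_top_of_finrank_eq
  rw [LinearMap.finrank_range_of_inj hind.dfinsupp_lsum_injective, ← h, ← finrank_directSum]
  rfl

theorem eigenspaces_of_le_finrank_of_sum_eq_finrank (hμ : Function.Injective μ) (d : ι → ℕ)
    (hd : ∀ i, d i ≤ finrank K (f.eigenspace (μ i))) (hd_pos : ∀ i, 0 < d i)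
    (hsum : ∑ i, d i = finrank K V) :
    (⨆ c, f.eigenspace c) = ⊤ ∧ (∀ c, f.HasEigenvalue c ↔ c ∈ Set.range μ) ∧
      ∀ i, finrank K (f.eigenspace (μ i)) = d i := by
  have hsum_eq : ∑ i, d i = ∑ i, finrank K (f.eigenspace (μ i)) :=
    le_antisymm (Finset.sum_le_sum fun i _ => hd i) (hsum ▸ sum_finrank_eigenspace_le hμ)
  have heq (i : ι) : finrank K (f.eigenspace (μ i)) = d i :=
    ((Finset.sum_eq_sum_iff_of_le fun i _ => hd i).1 hsum_eq i (Finset.mem_univ i)).symm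
  have htop := iSup_eigenspace_eq_top_of_sum_finrank_eq hμ (hsum_eq.symm.trans hsum)
  refine ⟨top_unique (htop ▸ iSup_le fun i => le_iSup _ (μ i)),
    fun c => ⟨fun hc => hc.mem_range_of_iSup_eigenspace_eq_top htop, ?_⟩, heq⟩
  rintro ⟨i, rfl⟩
  rw [hasEigenvalue_iff, ← Submodule.one_le_finrank_iff, heq i]
  exact hd_pos i

end Module.End

namespace Matrix

section Symmetrize

variable {n R : Type*} [CommRing R]

def symmetrize (M : Matrix n n R) : Matrix n n R := M + Mᵀ

theorem transpose_symmetrize (M : Matrix n n R) : (symmetrize M)ᵀ = symmetrize M := by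
  simp [symmetrize, add_comm]

theorem symmetrize_smul (r : R) (M : Matrix n n R) : symmetrize (r • M) = r • symmetrize M := by
  simp [symmetrize, smul_add]

theorem symmetrize_eq_zero_of_transpose_eq_neg {M : Matrix n n R} (hM : Mᵀ = -M) :
    symmetrize M = 0 := by
  simp [symmetrize, hM]

theorem symmetrize_eq_two_smul_of_transpose_eq {M : Matrix n n R} (hM : Mᵀ = M) :
    symmetrize M = (2 : R) • M := by
  rw [symmetrize, hM, two_smul]

def symProd (u v : n → R) : Matrix n n R := symmetrize (vecMulVec u v)

theorem transpose_symProd (u v : n → R) : (symProd u v)ᵀ = symProd u v :=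
  transpose_symmetrize _

theorem symmetrize_mul_symProd [Fintype n] {K : Matrix n n R} {u v : n → R} {a b : R}
    (hu : K *ᵥ u = a • u) (hv : K *ᵥ v = b • v) :
    symmetrize (K * symProd u v) = (a + b) • symProd u v := by
  ext i j
  simp only [symmetrize, symProd, transpose_vecMulVec, mul_add, mul_vecMulVec, hu, hv,
    smul_vecMulVec, transpose_add, transpose_smul, add_apply, smul_apply, vecMulVec_apply,
    smul_eq_mul]
  ring

theorem symProd_ne_zero [IsDomain R] [NeZero (2 : R)] {u v : n → R} (hu : u ≠ 0)
    (hv : v ≠ 0) : symProd u v ≠ 0 := by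
  obtain ⟨k, hk⟩ := Function.ne_iff.1 hu
  obtain ⟨l, hl⟩ := Function.ne_iff.1 hv
  intro h
  have hkk := congr_fun₂ h k k
  have hll := congr_fun₂ h l l
  have hkl := congr_fun₂ h k l
  simp only [symProd, symmetrize, add_apply, transpose_apply, vecMulVec_apply, zero_apply]
    at hkk hll hkl
  -- the diagonal entries force `v k = 0` and `u l = 0`, so entry `(k, l)` is `u k * v l ≠ 0`
  simp_all [← two_mul, two_ne_zero]

end Symmetrize

section SymmetrizedProductOperator

variable {n R : Type*} [Fintype n] [CommRing R] {A : Module.End R (Matrix n n R)}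
  {K : Matrix n n R} {c : R}

theorem mem_eigenspace_zero_of_transpose_eq_neg
    (hA : ∀ E, A E = c • symmetrize (K * symmetrize E)) {E : Matrix n n R} (hE : Eᵀ = -E) :
    E ∈ A.eigenspace 0 := by
  rw [Module.End.mem_eigenspace_iff, hA, symmetrize_eq_zero_of_transpose_eq_neg hE]
  simp [symmetrize]

theorem one_mem_eigenspace_zero [DecidableEq n]
    (hA : ∀ E, A E = c • symmetrize (K * symmetrize E)) (hK : Kᵀ = -K) : 1 ∈ A.eigenspace 0 := by
  rw [Module.End.mem_eigenspace_iff, hA, symmetrize_eq_two_smul_of_transpose_eq transpose_one,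
    mul_smul_comm, mul_one, symmetrize_smul, symmetrize_eq_zero_of_transpose_eq_neg hK]
  simp

theorem symProd_mem_eigenspace (hA : ∀ E, A E = c • symmetrize (K * symmetrize E))
    {u v : n → R} {a b : R} (hu : K *ᵥ u = a • u) (hv : K *ᵥ v = b • v) :
    symProd u v ∈ A.eigenspace (2 * c * (a + b)) := by
  rw [Module.End.mem_eigenspace_iff, hA,
    symmetrize_eq_two_smul_of_transpose_eq (transpose_symProd u v), mul_smul_comm,
    symmetrize_smul, symmetrize_mul_symProd hu hv, smul_smul, smul_smul]
  congr 1
  ring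

theorem one_le_finrank_eigenspace_symProd {F : Type*} [Field F] [NeZero (2 : F)]
    {A : Module.End F (Matrix n n F)} {K : Matrix n n F} {c : F}
    (hA : ∀ E, A E = c • symmetrize (K * symmetrize E)) {u v : n → F} {a b μ : F}
    (hu : K *ᵥ u = a • u) (hv : K *ᵥ v = b • v) (hμ : 2 * c * (a + b) = μ) (hu0 : u ≠ 0)
    (hv0 : v ≠ 0) : 1 ≤ finrank F (A.eigenspace μ) :=
  Submodule.one_le_finrank_iff.2 ((Submodule.ne_bot_iff _).2
    ⟨symProd u v, hμ ▸ symProd_mem_eigenspace hA hu hv, symProd_ne_zero hu0 hv0⟩)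

end SymmetrizedProductOperator

section CrossMatrix

variable {R : Type*} [CommRing R]

def crossMatrix (ξ : Fin 3 → R) : Matrix (Fin 3) (Fin 3) R :=
  !![0, -ξ 2, ξ 1; ξ 2, 0, -ξ 0; -ξ 1, ξ 0, 0]

theorem crossMatrix_mulVec (ξ v : Fin 3 → R) : crossMatrix ξ *ᵥ v = ξ ⨯₃ v := by
  ext i
  fin_cases i <;> simp [crossMatrix, cross_apply, mulVec, dotProduct, Fin.sum_univ_three] <;> ring

theorem crossMatrix_mulVec_self (ξ : Fin 3 → R) : crossMatrix ξ *ᵥ ξ = (0 : R) • ξ := by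
  rw [crossMatrix_mulVec, cross_self, zero_smul]

theorem transpose_crossMatrix (ξ : Fin 3 → R) : (crossMatrix ξ)ᵀ = -crossMatrix ξ := by
  ext i j
  fin_cases i <;> fin_cases j <;> simp [crossMatrix]

theorem det_crossMatrix_sub_smul_one (ξ : Fin 3 → R) (t : R) :
    (crossMatrix ξ - t • 1).det = -t * (t ^ 2 + ξ ⬝ᵥ ξ) := by
  simp [det_fin_three, crossMatrix, dotProduct, Fin.sum_univ_three]
  ring

theorem exists_crossMatrix_mulVec_eq_smul {F : Type*} [Field F] (ξ : Fin 3 → F) {t : F}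
    (ht : t ^ 2 + ξ ⬝ᵥ ξ = 0) : ∃ w ≠ 0, crossMatrix ξ *ᵥ w = t • w := by
  obtain ⟨w, hw0, hw⟩ := exists_mulVec_eq_zero_iff.2
    ((det_crossMatrix_sub_smul_one ξ t).trans (by rw [ht, mul_zero]))
  refine ⟨w, hw0, ?_⟩
  rwa [sub_mulVec, smul_mulVec, one_mulVec, sub_eq_zero] at hw

end CrossMatrix

theorem linearIndependent_antisymm_one_symProd {F : Type*} [Field F] [CharZero F]
    {ξ : Fin 3 → F} (hξ : ξ ⬝ᵥ ξ ≠ 0) :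
    LinearIndependent F ![single 0 1 1 - single 1 0 1, single 0 2 1 - single 2 0 1,
      single 1 2 1 - single 2 1 1, 1, symProd ξ ξ] := by
  rw [Fintype.linearIndependent_iff]
  intro g hg
  have entry (k l : Fin 3) := congr_fun₂ hg k l
  simp only [Fin.sum_univ_five, symProd, symmetrize] at entry
  have h00 := entry 0 0; have h11 := entry 1 1; have h22 := entry 2 2
  have h01 := entry 0 1; have h10 := entry 1 0; have h02 := entry 0 2
  have h20 := entry 2 0; have h12 := entry 1 2; have h21 := entry 2 1
  simp [vecMulVec_apply, Fin.ext_iff] at h00 h11 h22 h01 h10 h02 h20 h12 h21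
  have hq : ξ ⬝ᵥ ξ = ξ 0 * ξ 0 + ξ 1 * ξ 1 + ξ 2 * ξ 2 := by
    simp [dotProduct, Fin.sum_univ_three]
  have hg0 : g 0 = 0 := by linear_combination (h01 - h10) / 2
  have hg1 : g 1 = 0 := by linear_combination (h02 - h20) / 2
  have hg2 : g 2 = 0 := by linear_combination (h12 - h21) / 2
  have hg3 : g 3 = 0 := by
    have h : g 3 * ξ ⬝ᵥ ξ = 0 := by
      rw [hq]
      linear_combination ((ξ 1 ^ 2 + ξ 2 ^ 2) * h00 + (ξ 0 ^ 2 + ξ 2 ^ 2) * h11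
        + (ξ 0 ^ 2 + ξ 1 ^ 2) * h22 - ξ 0 * ξ 1 * (h01 + h10) - ξ 0 * ξ 2 * (h02 + h20)
        - ξ 1 * ξ 2 * (h12 + h21)) / 2
    simpa [hξ] using h
  have hg4 : g 4 = 0 := by
    have h : g 4 * ξ ⬝ᵥ ξ = 0 := by
      rw [hq]
      linear_combination (h00 + h11 + h22) / 2 - 3 / 2 * hg3
    simpa [hξ] using h
  intro i
  fin_cases i <;> assumption

section CrossMatrixOperator

open Complex

variable {ξ : Fin 3 → ℂ} {s : ℂ} {A : Module.End ℂ (Matrix (Fin 3) (Fin 3) ℂ)}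

theorem five_le_finrank_eigenspace_zero (hξ : ξ ⬝ᵥ ξ ≠ 0)
    (hA : ∀ E, A E = (I / 4) • symmetrize (crossMatrix ξ * symmetrize E)) :
    5 ≤ finrank ℂ (A.eigenspace 0) := by
  refine (linearIndependent_iff_card_le_finrank_span.1
    (linearIndependent_antisymm_one_symProd hξ)).trans
    (Submodule.finrank_mono (Submodule.span_le.2 (Set.range_subset_iff.2 fun i => ?_)))
  fin_cases i
  · exact mem_eigenspace_zero_of_transpose_eq_neg hA (by simp)
  · exact mem_eigenspace_zero_of_transpose_eq_neg hA (by simp)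
  · exact mem_eigenspace_zero_of_transpose_eq_neg hA (by simp)
  · exact one_mem_eigenspace_zero hA (transpose_crossMatrix ξ)
  · simpa using symProd_mem_eigenspace hA (crossMatrix_mulVec_self ξ) (crossMatrix_mulVec_self ξ)

theorem eigenspaces_symmetrize_crossMatrix_mul (hs : s ≠ 0) (hξ : ξ ⬝ᵥ ξ = s ^ 2)
    (hA : ∀ E, A E = (I / 4) • symmetrize (crossMatrix ξ * symmetrize E)) :
    (⨆ μ, A.eigenspace μ) = ⊤
    ∧ (∀ c, A.HasEigenvalue c ↔ (c = 0 ∨ c = s / 2 ∨ c = -(s / 2) ∨ c = s ∨ c = -s))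
    ∧ finrank ℂ (A.eigenspace 0) = 5
    ∧ finrank ℂ (A.eigenspace (s / 2)) = 1
    ∧ finrank ℂ (A.eigenspace (-(s / 2))) = 1
    ∧ finrank ℂ (A.eigenspace s) = 1
    ∧ finrank ℂ (A.eigenspace (-s)) = 1 := by
  have hξ0 : ξ ≠ 0 := by
    rintro rfl
    exact pow_ne_zero 2 hs (by simpa using hξ.symm)
  have hξK := crossMatrix_mulVec_self ξ
  obtain ⟨wp, hwp0, hwp⟩ := exists_crossMatrix_mulVec_eq_smul ξ (t := -(I * s))
    (by rw [hξ]; linear_combination s ^ 2 * I_sq)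
  obtain ⟨wm, hwm0, hwm⟩ := exists_crossMatrix_mulVec_eq_smul ξ (t := I * s)
    (by rw [hξ]; linear_combination s ^ 2 * I_sq)
  have h0 := five_le_finrank_eigenspace_zero (hξ ▸ pow_ne_zero 2 hs) hA
  have h1 : 1 ≤ finrank ℂ (A.eigenspace (s / 2)) :=
    one_le_finrank_eigenspace_symProd hA hwp hξK (by linear_combination -s / 2 * I_sq) hwp0 hξ0
  have h2 : 1 ≤ finrank ℂ (A.eigenspace (-(s / 2))) :=
    one_le_finrank_eigenspace_symProd hA hwm hξK (by linear_combination s / 2 * I_sq) hwm0 hξ0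
  have h3 : 1 ≤ finrank ℂ (A.eigenspace s) :=
    one_le_finrank_eigenspace_symProd hA hwp hwp (by linear_combination -s * I_sq) hwp0 hwp0
  have h4 : 1 ≤ finrank ℂ (A.eigenspace (-s)) :=
    one_le_finrank_eigenspace_symProd hA hwm hwm (by linear_combination s * I_sq) hwm0 hwm0
  let μ : Fin 5 → ℂ := ![0, s / 2, -(s / 2), s, -s]
  have hμ : Function.Injective μ := by
    intro i j h
    fin_cases i <;> fin_cases j <;> simp [μ] at h ⊢ <;> grind
  have hd (i : Fin 5) : ![5, 1, 1, 1, 1] i ≤ finrank ℂ (A.eigenspace (μ i)) := by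
    fin_cases i
    exacts [h0, h1, h2, h3, h4]
  obtain ⟨htop, heig, hfin⟩ := Module.End.eigenspaces_of_le_finrank_of_sum_eq_finrank hμ _ hd
    (by decide) (by simp [Fin.sum_univ_five, Module.finrank_matrix])
  refine ⟨htop, fun c => ?_, hfin 0, hfin 1, hfin 2, hfin 3, hfin 4⟩
  rw [heig]
  simp [μ, eq_comm]
  tauto

end CrossMatrixOperator

end Matrix

open Matrix Complex in
theorem apply_eq_smul_symmetrize_crossMatrix_mul (ξ : Fin 3 → ℝ) (A : Module.End ℂ Tens2)
    (hA : ∀ (E : Tens2) (i j : Fin 3), A E i j =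
      I * ∑ m, ∑ k, ∑ l, (ξ m : ℂ) * ((1/4) *
        (eps3 m l i * kd j k + eps3 m k i * kd j l
          + eps3 m l j * kd i k + eps3 m k j * kd i l)) * E k l)
    (E : Matrix (Fin 3) (Fin 3) ℂ) :
    A E = (I / 4) • symmetrize (crossMatrix (fun i => (ξ i : ℂ)) * symmetrize E) := by
  ext i j
  refine (hA E i j).trans ?_
  fin_cases i <;> fin_cases j <;>
    simp [Fin.sum_univ_three, eps3, sgnF, kd, crossMatrix, symmetrize, vecMul, dotProduct] <;> ring

/-- For a nonzero covector `ξ`, the linear map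
`E_{kl} ↦ i ξ_m ε^{m(l}{}_{(i} δ_{j)}{}^{k)} E_{kl}` on complex (0,2)-tensors is
diagonalizable with eigenvalues `0, ±|ξ|/2, ±|ξ|`; the eigenvalue `0` has a
5-dimensional eigenspace, each of `±|ξ|/2, ±|ξ|` has a 1-dimensional eigenspace. -/
theorem stmt_13 (ξ : Fin 3 → ℝ) (hξ : ξ ≠ 0)
    (A : Module.End ℂ Tens2)
    (hA : ∀ (E : Tens2) (i j : Fin 3), A E i j =
      Complex.I * ∑ m, ∑ k, ∑ l, (ξ m : ℂ) * ((1/4) *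
        (eps3 m l i * kd j k + eps3 m k i * kd j l
          + eps3 m l j * kd i k + eps3 m k j * kd i l)) * E k l) :
    (⨆ μ : ℂ, Module.End.eigenspace A μ) = ⊤
    ∧ (∀ c : ℂ, Module.End.HasEigenvalue A c ↔
        (c = 0 ∨ c = (Real.sqrt (∑ i, ξ i * ξ i) : ℂ) / 2
          ∨ c = -((Real.sqrt (∑ i, ξ i * ξ i) : ℂ) / 2)
          ∨ c = (Real.sqrt (∑ i, ξ i * ξ i) : ℂ)
          ∨ c = -(Real.sqrt (∑ i, ξ i * ξ i) : ℂ)))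
    ∧ Module.finrank ℂ (Module.End.eigenspace A 0) = 5
    ∧ Module.finrank ℂ (Module.End.eigenspace A ((Real.sqrt (∑ i, ξ i * ξ i) : ℂ) / 2)) = 1
    ∧ Module.finrank ℂ (Module.End.eigenspace A (-((Real.sqrt (∑ i, ξ i * ξ i) : ℂ) / 2))) = 1
    ∧ Module.finrank ℂ (Module.End.eigenspace A ((Real.sqrt (∑ i, ξ i * ξ i) : ℂ))) = 1
    ∧ Module.finrank ℂ (Module.End.eigenspace A (-(Real.sqrt (∑ i, ξ i * ξ i) : ℂ))) = 1 := by
  have hpos : 0 < ∑ i, ξ i * ξ i := by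
    obtain ⟨i, hi⟩ := Function.ne_iff.1 hξ
    exact Finset.sum_pos' (fun j _ => mul_self_nonneg (ξ j))
      ⟨i, Finset.mem_univ i, mul_self_pos.2 hi⟩
  refine Matrix.eigenspaces_symmetrize_crossMatrix_mul (ξ := fun i => (ξ i : ℂ)) ?_ ?_
    (apply_eq_smul_symmetrize_crossMatrix_mul ξ A hA)
  · exact_mod_cast (Real.sqrt_pos.2 hpos).ne'
  · rw [← Complex.ofReal_pow, Real.sq_sqrt hpos.le]
    simp [dotProduct]
end
end

section
/- Let μ > 3/4 and suppose u : (0, δ) → ℂ^n is C¹ and satisfies the differential inequality t (d/dt)(t^{-2μ} |u(t)|²) ≤ 2 t^{-2μ} Re⟨u(t), F(t)⟩ for a continuous F : (0, δ) → ℂ^n. Then for 0 < t₀ ≤ t < δ: t^{-μ}|u(t)| ≤ t₀^{-μ}|u(t₀)| + ∫_{t₀}^{t} s^{-μ}|F(s)| s^{-1} ds. In particular, if F ≡ 0 and lim_{t→0} t^{-μ}|u(t)| = 0, then u ≡ 0 on (0, δ). -/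
open Set Filter MeasureTheory

/-!
Writing `f t = t^{-μ}‖u t‖` and `h t = t^{-μ}‖F t‖ t⁻¹`, the differential inequality together
with Cauchy–Schwarz says `(f²)' ≤ 2 f h`. Away from the zeros of `f` this is `f' ≤ h`;
to handle zeros, compare instead `√(f² + η²)`, whose derivative is at most `h`, and let `η → 0`.
Integrating gives the energy estimate, and for `F ≡ 0` it says that `f` is nonincreasing,
so `f → 0` at `0⁺` forces `f ≡ 0`.
-/

theorem le_add_integral_of_hasDerivAt_sq_le {f g' h : ℝ → ℝ} {a b : ℝ} (hab : a ≤ b)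
    (hf : ContinuousOn f (Icc a b)) (hf0 : ∀ x ∈ Icc a b, 0 ≤ f x)
    (hderiv : ∀ x ∈ Ioo a b, HasDerivAt (fun y => f y ^ 2) (g' x) x)
    (hg' : ∀ x ∈ Ioo a b, g' x ≤ 2 * f x * h x)
    (hh : IntegrableOn h (Icc a b)) (hh0 : ∀ x ∈ Ioo a b, 0 ≤ h x) :
    f b ≤ f a + ∫ x in a..b, h x := by
  refine le_of_forall_pos_le_add fun η hη => ?_
  set φ : ℝ → ℝ := fun x => √(f x ^ 2 + η ^ 2)
  have hφ_pos : ∀ x, 0 < f x ^ 2 + η ^ 2 := fun x => by positivity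
  have hf_le_φ : ∀ x, f x ≤ φ x := fun x => Real.le_sqrt_of_sq_le (by nlinarith)
  have hφ_deriv : ∀ x ∈ Ioo a b, HasDerivAt φ (g' x / (2 * φ x)) x := fun x hx =>
    ((hderiv x hx).add_const (η ^ 2)).sqrt (hφ_pos x).ne'
  have hφ'_le : ∀ x ∈ Ioo a b, g' x / (2 * φ x) ≤ h x := by
    intro x hx
    have hφx : 0 < φ x := Real.sqrt_pos.2 (hφ_pos x)
    rw [div_le_iff₀ (by positivity)]
    nlinarith [hg' x hx, mul_nonneg (sub_nonneg.2 (hf_le_φ x)) (hh0 x hx)]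
  have hφ_ftc : φ b - φ a ≤ ∫ x in a..b, h x :=
    intervalIntegral.sub_le_integral_of_hasDeriv_right_of_le hab
      ((hf.pow 2).add continuousOn_const).sqrt (fun x hx => (hφ_deriv x hx).hasDerivWithinAt)
      hh hφ'_le
  have hφa : φ a ≤ f a + η :=
    Real.sqrt_le_iff.2 ⟨by linarith [hf0 a (left_mem_Icc.2 hab)], by
      nlinarith [hf0 a (left_mem_Icc.2 hab)]⟩
  linarith [hf_le_φ b]

theorem rpow_neg_mul_sq {x : ℝ} (hx : 0 ≤ x) (μ c : ℝ) :
    (x ^ (-μ) * c) ^ 2 = x ^ (-(2 * μ)) * c ^ 2 := by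
  rw [mul_pow, ← Real.rpow_natCast, ← Real.rpow_mul hx]
  ring_nf

theorem le_of_mul_le_rpow_mul_re_inner {E : Type*} [NormedAddCommGroup E]
    [InnerProductSpace ℂ E] {s μ D : ℝ} (hs : 0 < s) (x y : E)
    (h : s * D ≤ 2 * s ^ (-(2 * μ)) * (inner ℂ x y).re) :
    D ≤ 2 * (s ^ (-μ) * ‖x‖) * (s ^ (-μ) * ‖y‖ * s⁻¹) := by
  have hre : (inner ℂ x y).re ≤ ‖x‖ * ‖y‖ :=
    (Complex.re_le_norm _).trans (norm_inner_le_norm x y)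
  have hweight : s ^ (-(2 * μ)) = s ^ (-μ) * s ^ (-μ) := by
    rw [← Real.rpow_add hs]; ring_nf
  have hsD : s * D ≤ s * (2 * s ^ (-(2 * μ)) * (‖x‖ * ‖y‖) * s⁻¹) := by
    rw [mul_comm _ s⁻¹, ← mul_assoc, mul_inv_cancel₀ hs.ne', one_mul]
    exact h.trans (by gcongr)
  calc D ≤ 2 * s ^ (-(2 * μ)) * (‖x‖ * ‖y‖) * s⁻¹ := le_of_mul_le_mul_left hsD hs
    _ = _ := by rw [hweight]; ring

theorem rpow_neg_mul_norm_le_add_integral {n : ℕ} {δ μ : ℝ}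
    {u F : ℝ → EuclideanSpace ℂ (Fin n)}
    (hu : ContDiffOn ℝ 1 u (Ioo 0 δ)) (hF : ContinuousOn F (Ioo 0 δ))
    (hineq : ∀ t ∈ Ioo (0:ℝ) δ,
      t * deriv (fun s : ℝ => s ^ (-(2*μ)) * ‖u s‖^2) t
        ≤ 2 * t ^ (-(2*μ)) * (inner ℂ (u t) (F t) : ℂ).re)
    {t₀ t : ℝ} (ht₀ : 0 < t₀) (ht₀t : t₀ ≤ t) (htδ : t < δ) :
    t ^ (-μ) * ‖u t‖ ≤ t₀ ^ (-μ) * ‖u t₀‖ + ∫ s in t₀..t, s ^ (-μ) * ‖F s‖ * s⁻¹ := by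
  have hsub : Icc t₀ t ⊆ Ioo 0 δ := fun s hs => ⟨ht₀.trans_le hs.1, hs.2.trans_lt htδ⟩
  have hsub' : Ioo t₀ t ⊆ Ioo 0 δ := Ioo_subset_Icc_self.trans hsub
  have hrpow : ∀ c : ℝ, ContinuousOn (fun s : ℝ => s ^ c) (Ioo 0 δ) := fun c s hs =>
    (Real.continuousAt_rpow_const s c (Or.inl hs.1.ne')).continuousWithinAt
  have hderiv : ∀ s ∈ Ioo 0 δ, HasDerivAt (fun x => (x ^ (-μ) * ‖u x‖) ^ 2)
      (deriv (fun x : ℝ => x ^ (-(2*μ)) * ‖u x‖^2) s) s := by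
    intro s hs
    have hdiff := (Real.contDiffAt_rpow_const_of_ne (p := -(2 * μ)) hs.1.ne').mul
      ((hu.contDiffAt (isOpen_Ioo.mem_nhds hs)).norm_sq ℂ)
    refine (hdiff.differentiableAt one_ne_zero).hasDerivAt.congr_of_eventuallyEq ?_
    filter_upwards [Ioi_mem_nhds hs.1] with x hx using rpow_neg_mul_sq (le_of_lt hx) μ _
  have hf_cont : ContinuousOn (fun s => s ^ (-μ) * ‖u s‖) (Ioo 0 δ) :=
    (hrpow _).mul hu.continuousOn.norm
  have hh_cont : ContinuousOn (fun s => s ^ (-μ) * ‖F s‖ * s⁻¹) (Ioo 0 δ) :=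
    ((hrpow _).mul hF.norm).mul (continuousOn_id.inv₀ fun s hs => hs.1.ne')
  refine le_add_integral_of_hasDerivAt_sq_le ht₀t (hf_cont.mono hsub)
    (fun s hs => mul_nonneg (Real.rpow_nonneg (hsub hs).1.le _) (norm_nonneg _))
    (fun s hs => hderiv s (hsub' hs))
    (fun s hs => le_of_mul_le_rpow_mul_re_inner (hsub' hs).1 _ _
      (hineq s (hsub' hs)))
    ((hh_cont.mono hsub).integrableOn_compact isCompact_Icc)
    (fun s hs => by have := (hsub' hs).1; positivity)

theorem stmt_18_general (n : ℕ) (δ μ : ℝ)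
    (u F : ℝ → EuclideanSpace ℂ (Fin n))
    (hu : ContDiffOn ℝ 1 u (Ioo (0:ℝ) δ))
    (hF : ContinuousOn F (Ioo (0:ℝ) δ))
    (hineq : ∀ t ∈ Ioo (0:ℝ) δ,
      t * deriv (fun s : ℝ => s ^ (-(2*μ)) * ‖u s‖^2) t
        ≤ 2 * t ^ (-(2*μ)) * (inner ℂ (u t) (F t) : ℂ).re) :
    (∀ t₀ t : ℝ, 0 < t₀ → t₀ ≤ t → t < δ →
      t ^ (-μ) * ‖u t‖ ≤ t₀ ^ (-μ) * ‖u t₀‖ + ∫ s in t₀..t, s ^ (-μ) * ‖F s‖ * s⁻¹)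
    ∧ ((∀ t ∈ Ioo (0:ℝ) δ, F t = 0) →
        Tendsto (fun t : ℝ => t ^ (-μ) * ‖u t‖) (nhdsWithin 0 (Ioi 0)) (nhds 0) →
        ∀ t ∈ Ioo (0:ℝ) δ, u t = 0) := by
  refine ⟨fun _ _ => rpow_neg_mul_norm_le_add_integral hu hF hineq, fun hF0 hlim t ht => ?_⟩
  have hnonincr : ∀ t₀ ∈ Ioc 0 t, t ^ (-μ) * ‖u t‖ ≤ t₀ ^ (-μ) * ‖u t₀‖ := by
    intro t₀ ht₀
    have hzero : ∫ s in t₀..t, s ^ (-μ) * ‖F s‖ * s⁻¹ = 0 := by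
      refine (intervalIntegral.integral_congr fun s hs => ?_).trans intervalIntegral.integral_zero
      rw [uIcc_of_le ht₀.2] at hs
      simp [hF0 s ⟨ht₀.1.trans_le hs.1, hs.2.trans_lt ht.2⟩]
    simpa [hzero] using rpow_neg_mul_norm_le_add_integral hu hF hineq ht₀.1 ht₀.2 ht.2
  have hle : t ^ (-μ) * ‖u t‖ ≤ 0 :=
    ge_of_tendsto hlim (mem_of_superset (Ioc_mem_nhdsGT ht.1) hnonincr)
  have ht_pos : 0 < t ^ (-μ) := Real.rpow_pos_of_pos ht.1 _
  exact norm_le_zero_iff.1 (nonpos_of_mul_nonpos_right hle ht_pos)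

/-- Model Grönwall-type energy estimate for the singular initial value problem: if
`u : (0, δ) → ℂⁿ` is `C¹` and satisfies the differential inequality
`t (d/dt)(t^{-2μ} ‖u(t)‖²) ≤ 2 t^{-2μ} Re⟨u(t), F(t)⟩` with `μ > 3/4` and `F`
continuous, then `t^{-μ}‖u(t)‖ ≤ t₀^{-μ}‖u(t₀)‖ + ∫_{t₀}^{t} s^{-μ}‖F(s)‖ s⁻¹ ds` for
`0 < t₀ ≤ t < δ`; in particular, if `F ≡ 0` and `t^{-μ}‖u(t)‖ → 0` as `t → 0⁺`, then
`u ≡ 0` on `(0, δ)`. -/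
theorem stmt_18 (n : ℕ) (δ μ : ℝ) (hδ : 0 < δ) (hμ : 3/4 < μ)
    (u F : ℝ → EuclideanSpace ℂ (Fin n))
    (hu : ContDiffOn ℝ 1 u (Ioo (0:ℝ) δ))
    (hF : ContinuousOn F (Ioo (0:ℝ) δ))
    (hineq : ∀ t ∈ Ioo (0:ℝ) δ,
      t * deriv (fun s : ℝ => s ^ (-(2*μ)) * ‖u s‖^2) t
        ≤ 2 * t ^ (-(2*μ)) * (inner ℂ (u t) (F t) : ℂ).re) :
    (∀ t₀ t : ℝ, 0 < t₀ → t₀ ≤ t → t < δ →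
      t ^ (-μ) * ‖u t‖ ≤ t₀ ^ (-μ) * ‖u t₀‖ + ∫ s in t₀..t, s ^ (-μ) * ‖F s‖ * s⁻¹)
    ∧ ((∀ t ∈ Ioo (0:ℝ) δ, F t = 0) →
        Tendsto (fun t : ℝ => t ^ (-μ) * ‖u t‖) (nhdsWithin 0 (Ioi 0)) (nhds 0) →
        ∀ t ∈ Ioo (0:ℝ) δ, u t = 0) :=
  stmt_18_general n δ μ u F hu hF hineq
end
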